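/- arXiv:1506.03113 — 7 statements merged into one kernel-verified Lean document; each statement's English description precedes it below -/
import Mathlib

section
/- Let α > 1/2 and let h be the Gamma(α,1) density h(u) = u^{α-1} e^{-u} / Γ(α). Then λ_h = 1/(2α−1); that is, the infimum of the set of λ ∈ [0,∞) for which there exists k ∈ ℝ with (∫_0^∞ u^{-1/2} e^{-su/2} h(u) du) / (∫_0^∞ u^{1/2} e^{-su/2} h(u) du) ≤ λ s + k for all s ≥ 0 equals 1/(2α−1). -/
open MeasureTheory Set
open scoped ENNReal

/-- A mixing density: a Borel measurable function on `(0,∞)` (extended to all of `ℝ`),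
nonnegative on `(0,∞)`, integrating to 1 over `(0,∞)`. -/
def IsMixingDensity (h : ℝ → ℝ) : Prop :=
  Measurable h ∧ (∀ u ∈ Ioi (0:ℝ), 0 ≤ h u) ∧
    ∫⁻ u in Ioi (0:ℝ), ENNReal.ofReal (h u) = 1

/-- `∫_0^∞ u^{-1/2} e^{-su/2} h(u) du`, as an element of `[0,∞]`. -/
noncomputable def mixNum (h : ℝ → ℝ) (s : ℝ) : ℝ≥0∞ :=
  ∫⁻ u in Ioi (0:ℝ), ENNReal.ofReal (u ^ (-(1:ℝ) / 2) * Real.exp (-(s * u) / 2) * h u)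

/-- `∫_0^∞ u^{1/2} e^{-su/2} h(u) du`, as an element of `[0,∞]`. -/
noncomputable def mixDen (h : ℝ → ℝ) (s : ℝ) : ℝ≥0∞ :=
  ∫⁻ u in Ioi (0:ℝ), ENNReal.ofReal (u ^ ((1:ℝ) / 2) * Real.exp (-(s * u) / 2) * h u)

/-- `h ∈ A(λ)`: there is a constant `k` with
`(∫_0^∞ u^{-1/2} e^{-su/2} h du)/(∫_0^∞ u^{1/2} e^{-su/2} h du) ≤ λ s + k` for all `s ≥ 0`. -/
def MemA (h : ℝ → ℝ) (l : ℝ) : Prop :=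
  0 ≤ l ∧ ∃ k : ℝ, ∀ s : ℝ, 0 ≤ s → mixNum h s / mixDen h s ≤ ENNReal.ofReal (l * s + k)

/-- `λ_h ∈ [0,∞]`: the infimum of `{λ ∈ [0,∞) : h ∈ A(λ)}` (equal to `∞` if this set is empty). -/
noncomputable def lambdaH (h : ℝ → ℝ) : ℝ≥0∞ :=
  sInf (ENNReal.ofReal '' {l : ℝ | MemA h l})

/-!
Against the Gamma(α,1) density, `u ^ p * exp (-s u / 2)` integrates to
`Γ(α + p) (1 + s/2)^(-(α + p)) / Γ(α)`, so by `Γ(α + 1/2) = (α - 1/2) Γ(α - 1/2)` the ratio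
defining `A(λ)` is exactly the affine function `(s + 2)/(2α - 1)`. An affine function is bounded
by `λ s + k` on `[0, ∞)` for some `k` iff `λ` is at least its slope, so `λ_h` is that slope.
-/

lemma lintegral_rpow_mul_exp_neg_mul_Ioi {a r : ℝ} (ha : 0 < a) (hr : 0 < r) :
    ∫⁻ t in Ioi (0:ℝ), ENNReal.ofReal (t ^ (a - 1) * Real.exp (-(r * t)))
      = ENNReal.ofReal ((1 / r) ^ a * Real.Gamma a) := by
  have hint : IntegrableOn (fun t : ℝ ↦ t ^ (a - 1) * Real.exp (-(r * t))) (Ioi 0) := by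
    simpa using integrableOn_rpow_mul_exp_neg_mul_rpow (p := 1) (by linarith) one_pos hr
  rw [← Real.integral_rpow_mul_exp_neg_mul_Ioi ha hr, ofReal_integral_eq_lintegral_ofReal hint]
  filter_upwards [ae_restrict_mem measurableSet_Ioi] with t (ht : 0 < t)
  positivity

section GammaDensity

variable {α : ℝ} {h : ℝ → ℝ}

lemma lintegral_rpow_mul_exp_mul_gamma_Ioi (hα : 0 < α)
    (hdef : ∀ u : ℝ, 0 < u → h u = u ^ (α - 1) * Real.exp (-u) / Real.Gamma α)
    {p s : ℝ} (hp : 0 < α + p) (hs : -2 < s) :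
    ∫⁻ u in Ioi (0:ℝ), ENNReal.ofReal (u ^ p * Real.exp (-(s * u) / 2) * h u)
      = ENNReal.ofReal ((1 / (1 + s / 2)) ^ (α + p) * Real.Gamma (α + p) / Real.Gamma α) := by
  have hΓ : 0 ≤ (Real.Gamma α)⁻¹ := (inv_pos.mpr (Real.Gamma_pos_of_pos hα)).le
  have hrate : 0 < 1 + s / 2 := by linarith
  have hintegrand : ∀ u ∈ Ioi (0:ℝ), ENNReal.ofReal (u ^ p * Real.exp (-(s * u) / 2) * h u)
      = ENNReal.ofReal (Real.Gamma α)⁻¹ *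
        ENNReal.ofReal (u ^ (α + p - 1) * Real.exp (-((1 + s / 2) * u))) := by
    intro u (hu : 0 < u)
    rw [← ENNReal.ofReal_mul hΓ, hdef u hu, add_sub_right_comm, Real.rpow_add hu,
      show -((1 + s / 2) * u) = -u + -(s * u) / 2 by ring, Real.exp_add]
    congr 1
    ring
  rw [setLIntegral_congr_fun measurableSet_Ioi hintegrand,
    lintegral_const_mul' _ _ ENNReal.ofReal_ne_top,
    lintegral_rpow_mul_exp_neg_mul_Ioi hp hrate, ← ENNReal.ofReal_mul hΓ]
  congr 1
  ring

lemma mixNum_div_mixDen_of_gamma (hα : 1 / 2 < α)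
    (hdef : ∀ u : ℝ, 0 < u → h u = u ^ (α - 1) * Real.exp (-u) / Real.Gamma α)
    {s : ℝ} (hs : -2 < s) :
    mixNum h s / mixDen h s = ENNReal.ofReal ((s + 2) / (2 * α - 1)) := by
  have hα₀ : 0 < α := by linarith
  have hrate : 0 < 1 + s / 2 := by linarith
  have hΓα := Real.Gamma_pos_of_pos hα₀
  have hΓm := Real.Gamma_pos_of_pos (by linarith : 0 < α + -1 / 2)
  have hΓp := Real.Gamma_pos_of_pos (by linarith : 0 < α + 1 / 2)
  rw [mixNum, mixDen, lintegral_rpow_mul_exp_mul_gamma_Ioi hα₀ hdef (by linarith) hs,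
    lintegral_rpow_mul_exp_mul_gamma_Ioi hα₀ hdef (by linarith) hs,
    ← ENNReal.ofReal_div_of_pos (by positivity)]
  congr 1
  have hshift : α + 1 / 2 = (α + -1 / 2) + 1 := by ring
  rw [hshift, Real.Gamma_add_one (by linarith), Real.rpow_add_one (by positivity)]
  have hB : 0 < (1 / (1 + s / 2)) ^ (α + -1 / 2) := by positivity
  generalize (1 / (1 + s / 2)) ^ (α + -1 / 2) = B at hB ⊢
  generalize Real.Gamma (α + -1 / 2) = G at hΓm ⊢
  have : 0 < 2 * α - 1 := by linarith
  rw [show α + -1 / 2 = (2 * α - 1) / 2 by ring]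
  field_simp
  ring

end GammaDensity

section AffineRatio

variable {h : ℝ → ℝ} {c d : ℝ}

lemma memA_iff_of_div_eq_affine (hc : 0 ≤ c)
    (hratio : ∀ s : ℝ, 0 ≤ s → mixNum h s / mixDen h s = ENNReal.ofReal (c * s + d)) {l : ℝ} :
    MemA h l ↔ c ≤ l := by
  constructor
  · rintro ⟨hl, k, hk⟩
    by_contra! hlt
    have hgap : 0 < c - l := sub_pos.2 hlt
    -- pick `s` with `(c - l) s` larger than both `k - d` and `-d`
    obtain ⟨s, hs, hgap_s⟩ : ∃ s : ℝ, 0 ≤ s ∧ c * s - l * s = |k - d| + |d| + 1 :=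
      ⟨(|k - d| + |d| + 1) / (c - l), div_nonneg (by positivity) hgap.le,
        by rw [← sub_mul, mul_div_cancel₀ _ hgap.ne']⟩
    have hls : 0 ≤ l * s := mul_nonneg hl hs
    have hbound := hk s hs
    rw [hratio s hs, ENNReal.ofReal_le_ofReal_iff'] at hbound
    rcases hbound with hbound | hbound
    · linarith [le_abs_self (k - d), abs_nonneg d]
    · linarith [neg_abs_le d, abs_nonneg (k - d)]
  · intro hl
    refine ⟨hc.trans hl, d, fun s hs ↦ (hratio s hs).trans_le (ENNReal.ofReal_le_ofReal ?_)⟩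
    gcongr

lemma lambdaH_eq_of_div_eq_affine (hc : 0 ≤ c)
    (hratio : ∀ s : ℝ, 0 ≤ s → mixNum h s / mixDen h s = ENNReal.ofReal (c * s + d)) :
    lambdaH h = ENNReal.ofReal c := by
  have hA : {l : ℝ | MemA h l} = Ici c := Set.ext fun _ ↦ memA_iff_of_div_eq_affine hc hratio
  rw [lambdaH, hA]
  exact (ENNReal.ofReal_mono.map_isLeast isLeast_Ici).csInf_eq

end AffineRatio

theorem gamma_lambdaH_general (α : ℝ) (hα : 1 / 2 < α) (h : ℝ → ℝ)
    (hdef : ∀ u : ℝ, 0 < u → h u = u ^ (α - 1) * Real.exp (-u) / Real.Gamma α) :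
    lambdaH h = ENNReal.ofReal (1 / (2 * α - 1)) := by
  have hα' : 0 < 2 * α - 1 := by linarith
  refine lambdaH_eq_of_div_eq_affine (d := 2 / (2 * α - 1)) (by positivity) fun s hs ↦ ?_
  rw [mixNum_div_mixDen_of_gamma hα hdef (by linarith)]
  congr 1
  ring

/-- For the Gamma(α,1) mixing density with `α > 1/2`, `λ_h = 1/(2α-1)`. -/
theorem gamma_lambdaH (α : ℝ) (hα : 1 / 2 < α) (h : ℝ → ℝ)
    (hmix : IsMixingDensity h)
    (hdef : ∀ u : ℝ, 0 < u → h u = u ^ (α - 1) * Real.exp (-u) / Real.Gamma α) :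
    lambdaH h = ENNReal.ofReal (1 / (2 * α - 1)) :=
  gamma_lambdaH_general α hα h hdef
end

section
/- Suppose h and h̃ are two mixing densities that are both strictly positive in a neighborhood of zero, and suppose lim_{u→0+} h(u)/h̃(u) exists and lies in (0,∞). Then λ_h = λ_{h̃} (as elements of [0,∞]). -/
open MeasureTheory Set
open scoped ENNReal

/-!
`λ_h` only depends on `h` near `0`. Suppose `c₁ h̃ ≤ h ≤ c₂ h̃` on `(0, ε)` and split every
integral at `ε`. On `[ε, ∞)` the factor `e^{-su/2}` is at most `e^{-sε/2}`, while the part of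
`∫ u^{1/2} e^{-su/2} h̃` over `(0, ε)` decays no faster than `e^{-sε/4}`, because `h̃ > 0` near `0`.
So for large `s` the tails are negligible, and `h̃ ∈ A(λ)` yields
`∫ u^{-1/2} e^{-su/2} h ≤ ((1 + δ) c₂ λ / c₁ · s + k) ∫ u^{1/2} e^{-su/2} h`. Bounded ranges of `s`
only cost a constant: `h̃ ∈ A(λ)` forces `∫ u^{-1/2} h̃ < ∞`, hence `∫ u^{-1/2} h < ∞`.
Letting `c₁, c₂ → L` and `δ → 0` gives `λ_h ≤ λ_h̃`, and the hypotheses are symmetric.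
-/

open Filter Topology Real

noncomputable def mixIntegral (p : ℝ) (g : ℝ → ℝ) (s : ℝ) (S : Set ℝ) : ℝ≥0∞ :=
  ∫⁻ u in S, ENNReal.ofReal (u ^ p * exp (-(s * u) / 2) * g u)

lemma mixNum_eq_mixIntegral (h : ℝ → ℝ) (s : ℝ) :
    mixNum h s = mixIntegral (-1 / 2) h s (Ioi 0) := rfl

lemma mixDen_eq_mixIntegral (h : ℝ → ℝ) (s : ℝ) :
    mixDen h s = mixIntegral (1 / 2) h s (Ioi 0) := rfl

section mixIntegral

variable {p q s t c ε : ℝ} {f g : ℝ → ℝ} {S : Set ℝ}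

lemma mixIntegral_le_ofReal_mul (hS : MeasurableSet S) (hc : 0 ≤ c)
    (hfg : ∀ u ∈ S,
      u ^ p * exp (-(s * u) / 2) * f u ≤ c * (u ^ q * exp (-(t * u) / 2) * g u)) :
    mixIntegral p f s S ≤ ENNReal.ofReal c * mixIntegral q g t S := by
  rw [mixIntegral, mixIntegral, ← lintegral_const_mul' _ _ ENNReal.ofReal_ne_top]
  refine setLIntegral_mono' hS fun u hu => ?_
  rw [← ENNReal.ofReal_mul hc]
  exact ENNReal.ofReal_le_ofReal (hfg u hu)

lemma ofReal_mul_mixIntegral_le (hS : MeasurableSet S) (hc : 0 ≤ c)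
    (hfg : ∀ u ∈ S,
      c * (u ^ p * exp (-(s * u) / 2) * f u) ≤ u ^ q * exp (-(t * u) / 2) * g u) :
    ENNReal.ofReal c * mixIntegral p f s S ≤ mixIntegral q g t S := by
  rw [mixIntegral, mixIntegral, ← lintegral_const_mul' _ _ ENNReal.ofReal_ne_top]
  refine setLIntegral_mono' hS fun u hu => ?_
  rw [← ENNReal.ofReal_mul hc]
  exact ENNReal.ofReal_le_ofReal (hfg u hu)

lemma mixIntegral_mono_set {S T : Set ℝ} (hST : S ⊆ T) :
    mixIntegral p g s S ≤ mixIntegral p g s T :=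
  lintegral_mono_set hST

lemma mixIntegral_Ioi_eq_add (hε : 0 < ε) :
    mixIntegral p g s (Ioi 0) = mixIntegral p g s (Ioo 0 ε) + mixIntegral p g s (Ici ε) := by
  rw [mixIntegral, mixIntegral, mixIntegral, ← Ioo_union_Ici_eq_Ioi hε]
  exact lintegral_union measurableSet_Ici
    (Set.disjoint_left.mpr fun _ hu hu' => (not_le.mpr hu.2) hu')

lemma mixIntegral_anti (hS : MeasurableSet S) (hS0 : S ⊆ Ioi 0) (hg : ∀ u ∈ S, 0 ≤ g u)
    (hst : s ≤ t) : mixIntegral p g t S ≤ mixIntegral p g s S := by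
  simpa using mixIntegral_le_ofReal_mul (c := 1) hS zero_le_one fun u hu => by
    have hu0 : 0 < u := hS0 hu
    have : exp (-(t * u) / 2) ≤ exp (-(s * u) / 2) := exp_le_exp.2 (by nlinarith)
    rw [one_mul]
    gcongr
    exact hg u hu

lemma IsMixingDensity.mixIntegral_le (hg : IsMixingDensity g) (hS : MeasurableSet S)
    (hS0 : S ⊆ Ioi 0) (hc : 0 ≤ c) (hw : ∀ u ∈ S, u ^ p * exp (-(s * u) / 2) ≤ c) :
    mixIntegral p g s S ≤ ENNReal.ofReal c := by
  obtain ⟨-, hg0, hg1⟩ := hg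
  calc mixIntegral p g s S ≤ ∫⁻ u in S, ENNReal.ofReal c * ENNReal.ofReal (g u) := by
        refine setLIntegral_mono' hS fun u hu => ?_
        rw [← ENNReal.ofReal_mul hc]
        exact ENNReal.ofReal_le_ofReal (mul_le_mul_of_nonneg_right (hw u hu) (hg0 u (hS0 hu)))
    _ = ENNReal.ofReal c * ∫⁻ u in S, ENNReal.ofReal (g u) :=
        lintegral_const_mul' _ _ ENNReal.ofReal_ne_top
    _ ≤ ENNReal.ofReal c * ∫⁻ u in Ioi 0, ENNReal.ofReal (g u) := by
        gcongr
    _ = ENNReal.ofReal c := by rw [hg1, mul_one]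

end mixIntegral

lemma rpow_half_le_exp_half {x : ℝ} (hx : 0 ≤ x) : x ^ (1 / 2 : ℝ) ≤ exp (x / 2) := by
  calc x ^ (1 / 2 : ℝ) ≤ exp x ^ (1 / 2 : ℝ) := by
        gcongr
        linarith [add_one_le_exp x]
    _ = exp (x / 2) := by rw [← exp_mul, mul_one_div]

namespace IsMixingDensity

variable {g : ℝ → ℝ}

lemma mixDen_one_le (hg : IsMixingDensity g) : mixDen g 1 ≤ 1 := by
  rw [mixDen_eq_mixIntegral, ← ENNReal.ofReal_one]
  refine hg.mixIntegral_le measurableSet_Ioi subset_rfl zero_le_one fun u hu => ?_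
  have hu0 : (0 : ℝ) ≤ u := le_of_lt hu
  calc u ^ (1 / 2 : ℝ) * exp (-(1 * u) / 2) ≤ exp (u / 2) * exp (-(u / 2)) := by
        rw [show -(1 * u) / 2 = -(u / 2) by ring]
        gcongr
        exact rpow_half_le_exp_half hu0
    _ = 1 := by rw [← exp_add, add_neg_cancel, exp_zero]

lemma mixNum_zero_le (hg : IsMixingDensity g) :
    mixNum g 0 ≤ ENNReal.ofReal (exp (1 / 2)) * mixNum g 1 + 1 := by
  rw [mixNum_eq_mixIntegral, mixNum_eq_mixIntegral, mixIntegral_Ioi_eq_add one_pos]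
  gcongr
  · calc mixIntegral (-1 / 2) g 0 (Ioo 0 1)
        ≤ ENNReal.ofReal (exp (1 / 2)) * mixIntegral (-1 / 2) g 1 (Ioo 0 1) := by
          refine mixIntegral_le_ofReal_mul measurableSet_Ioo (exp_pos _).le fun u hu => ?_
          have hw : 0 ≤ u ^ (-1 / 2 : ℝ) * g u :=
            mul_nonneg (rpow_nonneg hu.1.le _) (hg.2.1 u hu.1)
          have he : 1 ≤ exp (1 / 2) * exp (-(1 * u) / 2) := by
            rw [← exp_add]
            exact one_le_exp (by linarith [hu.2])
          calc u ^ (-1 / 2 : ℝ) * exp (-(0 * u) / 2) * g u = (u ^ (-1 / 2 : ℝ) * g u) * 1 := by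
                simp
            _ ≤ (u ^ (-1 / 2 : ℝ) * g u) * (exp (1 / 2) * exp (-(1 * u) / 2)) := by gcongr
            _ = _ := by ring
      _ ≤ ENNReal.ofReal (exp (1 / 2)) * mixIntegral (-1 / 2) g 1 (Ioi 0) := by
          gcongr
          exact mixIntegral_mono_set Ioo_subset_Ioi_self
  · rw [← ENNReal.ofReal_one]
    refine hg.mixIntegral_le measurableSet_Ici (fun u (hu : 1 ≤ u) => one_pos.trans_le hu)
      zero_le_one fun u hu => ?_
    simpa using rpow_le_one_of_one_le_of_nonpos hu (by norm_num : (-1 / 2 : ℝ) ≤ 0)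

end IsMixingDensity

section MemA

variable {h : ℝ → ℝ} {l k : ℝ}

lemma MemA.exists_le_mul (hl : MemA h l) :
    ∃ k ≥ 0, ∀ s, 0 ≤ s → mixNum h s ≤ ENNReal.ofReal (l * s + k) * mixDen h s := by
  obtain ⟨hl0, k, hk⟩ := hl
  -- with `k ≥ 1` the bound is positive, so the quotient clears even where `mixDen h s = ∞`
  refine ⟨max k 1, by positivity, fun s hs => ?_⟩
  have hpos : 0 < l * s + max k 1 := by positivity
  refine (ENNReal.div_le_iff_le_mul (.inr ENNReal.ofReal_ne_top)
    (.inr (ENNReal.ofReal_pos.2 hpos).ne')).1 ((hk s hs).trans ?_)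
  gcongr
  exact le_max_left k 1

lemma MemA.mixNum_zero_ne_top (hm : IsMixingDensity h) (hl : MemA h l) : mixNum h 0 ≠ ⊤ := by
  obtain ⟨k, -, hk⟩ := hl.exists_le_mul
  have hN1 : mixNum h 1 ≠ ⊤ := ne_top_of_le_ne_top (b := ENNReal.ofReal (l * 1 + k) * 1)
    (by finiteness) ((hk 1 zero_le_one).trans (by gcongr; exact hm.mixDen_one_le))
  exact ne_top_of_le_ne_top (by finiteness) hm.mixNum_zero_le

lemma memA_of_le_mul (hl : 0 ≤ l)
    (hk : ∀ s, 0 ≤ s → mixNum h s ≤ ENNReal.ofReal (l * s + k) * mixDen h s) : MemA h l :=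
  ⟨hl, k, fun s hs => ENNReal.div_le_of_le_mul (hk s hs)⟩

lemma memA_of_eventually_le_mul (hm : IsMixingDensity h) (hl : 0 ≤ l) (hN : mixNum h 0 ≠ ⊤)
    (hD : ∀ s, 0 ≤ s → 0 < mixDen h s)
    (hev : ∀ᶠ s in atTop, mixNum h s ≤ ENNReal.ofReal (l * s + k) * mixDen h s) :
    MemA h l := by
  obtain ⟨s₀, hs₀⟩ := eventually_atTop.1 (hev.and (eventually_ge_atTop 0))
  obtain ⟨d, -, hd0, hd⟩ := ENNReal.lt_iff_exists_real_btwn.1 (hD s₀ (hs₀ s₀ le_rfl).2)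
  have hd0 : 0 < d := ENNReal.ofReal_pos.1 hd0
  set K := (mixNum h 0).toReal / d
  refine memA_of_le_mul hl (k := max k K) fun s hs => ?_
  rcases le_total s₀ s with hs₀s | hss₀
  · refine (hs₀ s hs₀s).1.trans ?_
    gcongr
    exact le_max_left _ _
  · calc mixNum h s ≤ mixNum h 0 := mixIntegral_anti measurableSet_Ioi subset_rfl hm.2.1 hs
      _ = ENNReal.ofReal K * ENNReal.ofReal d := by
          rw [← ENNReal.ofReal_mul (by positivity), div_mul_cancel₀ _ hd0.ne',
            ENNReal.ofReal_toReal hN]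
      _ ≤ ENNReal.ofReal (l * s + max k K) * mixDen h s₀ := by
          gcongr
          nlinarith [mul_nonneg hl hs, le_max_right k K]
      _ ≤ ENNReal.ofReal (l * s + max k K) * mixDen h s := by
          gcongr
          exact mixIntegral_anti measurableSet_Ioi subset_rfl hm.2.1 hss₀

end MemA

section comparison

variable {h h' g : ℝ → ℝ} {s c ε : ℝ}

lemma mixNum_le_of_le_mul (hm : IsMixingDensity h) (hε : 0 < ε) (hc : 0 ≤ c) (hs : 0 ≤ s)
    (hup : ∀ u ∈ Ioo 0 ε, h u ≤ c * h' u) :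
    mixNum h s ≤ ENNReal.ofReal c * mixNum h' s +
      ENNReal.ofReal (ε ^ (-1 / 2 : ℝ) * exp (-(s * ε) / 2)) := by
  rw [mixNum_eq_mixIntegral, mixNum_eq_mixIntegral, mixIntegral_Ioi_eq_add hε]
  gcongr
  · calc mixIntegral (-1 / 2) h s (Ioo 0 ε)
        ≤ ENNReal.ofReal c * mixIntegral (-1 / 2) h' s (Ioo 0 ε) := by
          refine mixIntegral_le_ofReal_mul measurableSet_Ioo hc fun u hu => ?_
          have hw : 0 ≤ u ^ (-1 / 2 : ℝ) * exp (-(s * u) / 2) :=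
            mul_nonneg (rpow_nonneg hu.1.le _) (exp_pos _).le
          calc u ^ (-1 / 2 : ℝ) * exp (-(s * u) / 2) * h u
              ≤ u ^ (-1 / 2 : ℝ) * exp (-(s * u) / 2) * (c * h' u) := by gcongr; exact hup u hu
            _ = _ := by ring
      _ ≤ ENNReal.ofReal c * mixIntegral (-1 / 2) h' s (Ioi 0) := by
          gcongr
          exact mixIntegral_mono_set Ioo_subset_Ioi_self
  · refine hm.mixIntegral_le measurableSet_Ici (fun u (hu : ε ≤ u) => hε.trans_le hu)
      (by positivity) fun u (hu : ε ≤ u) => ?_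
    exact mul_le_mul (rpow_le_rpow_of_nonpos hε hu (by norm_num)) (exp_le_exp.2 (by nlinarith))
      (exp_pos _).le (rpow_nonneg hε.le _)

lemma ofReal_mul_mixIntegral_Ioo_le_mixDen (hε : 0 < ε) (hc : 0 ≤ c)
    (hlow : ∀ u ∈ Ioo 0 ε, c * h' u ≤ h u) :
    ENNReal.ofReal c * mixIntegral (1 / 2) h' s (Ioo 0 ε) ≤ mixDen h s := by
  rw [mixDen_eq_mixIntegral, mixIntegral_Ioi_eq_add hε]
  refine le_add_right (ofReal_mul_mixIntegral_le measurableSet_Ioo hc fun u hu => ?_)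
  have hw : 0 ≤ u ^ (1 / 2 : ℝ) * exp (-(s * u) / 2) :=
    mul_nonneg (rpow_nonneg hu.1.le _) (exp_pos _).le
  calc c * (u ^ (1 / 2 : ℝ) * exp (-(s * u) / 2) * h' u)
      = u ^ (1 / 2 : ℝ) * exp (-(s * u) / 2) * (c * h' u) := by ring
    _ ≤ _ := by gcongr; exact hlow u hu

lemma exists_pos_le_mixIntegral_Ioo (p : ℝ) (hgm : Measurable g) (hε : 0 < ε)
    (hg : ∀ u ∈ Ioo 0 ε, 0 < g u) :
    ∃ a > 0, ∀ s, 0 ≤ s →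
      ENNReal.ofReal (a * exp (-(s * ε) / 4)) ≤ mixIntegral p g s (Ioo 0 ε) := by
  have hsub : Ioo 0 (ε / 2) ⊆ Ioo 0 ε := Ioo_subset_Ioo_right (by linarith)
  have hA : 0 < mixIntegral p g 0 (Ioo 0 (ε / 2)) := by
    refine (setLIntegral_pos_iff (by fun_prop)).2 <|
      ((Measure.measure_Ioo_pos _).2 (by positivity)).trans_le (measure_mono fun u hu => ⟨?_, hu⟩)
    have := hg u (hsub hu)
    have := hu.1
    exact (ENNReal.ofReal_pos.2 (by positivity)).ne'
  obtain ⟨a, -, ha0, ha⟩ := ENNReal.lt_iff_exists_real_btwn.1 hA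
  refine ⟨a, ENNReal.ofReal_pos.1 ha0, fun s hs => ?_⟩
  calc ENNReal.ofReal (a * exp (-(s * ε) / 4))
      = ENNReal.ofReal (exp (-(s * ε) / 4)) * ENNReal.ofReal a := by
        rw [← ENNReal.ofReal_mul (by positivity), mul_comm]
    _ ≤ ENNReal.ofReal (exp (-(s * ε) / 4)) * mixIntegral p g 0 (Ioo 0 (ε / 2)) := by
        gcongr
    _ ≤ mixIntegral p g s (Ioo 0 (ε / 2)) := by
        refine ofReal_mul_mixIntegral_le measurableSet_Ioo (exp_pos _).le fun u hu => ?_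
        have hw : 0 ≤ u ^ p * g u := mul_nonneg (rpow_nonneg hu.1.le _) (hg u (hsub hu)).le
        have he : exp (-(s * ε) / 4) ≤ exp (-(s * u) / 2) :=
          exp_le_exp.2 (by nlinarith [mul_le_mul_of_nonneg_left hu.2.le hs])
        calc exp (-(s * ε) / 4) * (u ^ p * exp (-(0 * u) / 2) * g u)
            = (u ^ p * g u) * exp (-(s * ε) / 4) := by
              rw [zero_mul, neg_zero, zero_div, exp_zero]; ring
          _ ≤ (u ^ p * g u) * exp (-(s * u) / 2) := by gcongr
          _ = _ := by ring
    _ ≤ mixIntegral p g s (Ioo 0 ε) := mixIntegral_mono_set hsub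

lemma IsMixingDensity.mixDen_le_add (hg : IsMixingDensity g) (hε : 0 < ε) (hs : 1 ≤ s) :
    mixDen g s ≤
      mixIntegral (1 / 2) g s (Ioo 0 ε) + ENNReal.ofReal (exp (-((s - 1) * ε) / 2)) := by
  rw [mixDen_eq_mixIntegral, mixIntegral_Ioi_eq_add hε]
  gcongr
  calc mixIntegral (1 / 2) g s (Ici ε)
      ≤ ENNReal.ofReal (exp (-((s - 1) * ε) / 2)) * mixIntegral (1 / 2) g 1 (Ici ε) := by
        refine mixIntegral_le_ofReal_mul measurableSet_Ici (exp_pos _).le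
          fun u (hu : ε ≤ u) => ?_
        have hw : 0 ≤ u ^ (1 / 2 : ℝ) * g u :=
          mul_nonneg (rpow_nonneg (hε.le.trans hu) _) (hg.2.1 u (hε.trans_le hu))
        have he : exp (-((s - 1) * u) / 2) ≤ exp (-((s - 1) * ε) / 2) :=
          exp_le_exp.2 (by nlinarith)
        have hsplit : exp (-(s * u) / 2) = exp (-((s - 1) * u) / 2) * exp (-(1 * u) / 2) := by
          rw [← exp_add]; ring_nf
        calc u ^ (1 / 2 : ℝ) * exp (-(s * u) / 2) * g u
            = (u ^ (1 / 2 : ℝ) * g u) * exp (-((s - 1) * u) / 2) * exp (-(1 * u) / 2) := by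
              rw [hsplit]; ring
          _ ≤ (u ^ (1 / 2 : ℝ) * g u) * exp (-((s - 1) * ε) / 2) * exp (-(1 * u) / 2) := by
              gcongr
          _ = _ := by ring
    _ ≤ ENNReal.ofReal (exp (-((s - 1) * ε) / 2)) * mixDen g 1 := by
        gcongr
        exact mixIntegral_mono_set fun u (hu : ε ≤ u) => hε.trans_le hu
    _ ≤ ENNReal.ofReal (exp (-((s - 1) * ε) / 2)) * 1 := by
        gcongr
        exact hg.mixDen_one_le
    _ = ENNReal.ofReal (exp (-((s - 1) * ε) / 2)) := mul_one _

end comparison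

section nearZero

variable {g : ℝ → ℝ} {ε δ : ℝ}

lemma exists_exp_le_mul_mixIntegral_Ioo (p : ℝ) (hgm : Measurable g) (hε : 0 < ε)
    (hg : ∀ u ∈ Ioo 0 ε, 0 < g u) :
    ∃ K ≥ 0, ∀ s, 0 ≤ s →
      ENNReal.ofReal (exp (-(s * ε) / 2)) ≤ ENNReal.ofReal K * mixIntegral p g s (Ioo 0 ε) := by
  obtain ⟨a, ha0, ha⟩ := exists_pos_le_mixIntegral_Ioo p hgm hε hg
  refine ⟨a⁻¹, by positivity, fun s hs => ?_⟩
  calc ENNReal.ofReal (exp (-(s * ε) / 2))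
      ≤ ENNReal.ofReal (a⁻¹ * (a * exp (-(s * ε) / 4))) := by
        rw [inv_mul_cancel_left₀ ha0.ne']
        exact ENNReal.ofReal_le_ofReal (exp_le_exp.2 (by nlinarith [mul_nonneg hs hε.le]))
    _ = ENNReal.ofReal a⁻¹ * ENNReal.ofReal (a * exp (-(s * ε) / 4)) :=
        ENNReal.ofReal_mul (by positivity)
    _ ≤ ENNReal.ofReal a⁻¹ * mixIntegral p g s (Ioo 0 ε) := by
        gcongr
        exact ha s hs

lemma IsMixingDensity.eventually_mixDen_le (hg : IsMixingDensity g) (hε : 0 < ε)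
    (hpos : ∀ u ∈ Ioo 0 ε, 0 < g u) (hδ : 0 < δ) :
    ∀ᶠ s in atTop,
      mixDen g s ≤ ENNReal.ofReal (1 + δ) * mixIntegral (1 / 2) g s (Ioo 0 ε) := by
  obtain ⟨a, ha0, ha⟩ := exists_pos_le_mixIntegral_Ioo (1 / 2) hg.1 hε hpos
  have hdecay : Tendsto (fun s => exp (-(s * ε) / 4)) atTop (𝓝 0) :=
    tendsto_exp_atBot.comp
      ((tendsto_neg_atTop_atBot.comp (tendsto_id.atTop_mul_const hε)).atBot_div_const
        (by norm_num))
  have hsmall : ∀ᶠ s in atTop, exp (-(s * ε) / 4) * exp (ε / 2) < δ * a :=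
    (hdecay.mul_const _).eventually (gt_mem_nhds (by simpa using mul_pos hδ ha0))
  filter_upwards [hsmall, eventually_ge_atTop 1] with s hsδ hs1
  set Dn := mixIntegral (1 / 2) g s (Ioo 0 ε)
  have htail : exp (-((s - 1) * ε) / 2) ≤ δ * (a * exp (-(s * ε) / 4)) := by
    calc exp (-((s - 1) * ε) / 2) = exp (-(s * ε) / 4) * exp (ε / 2) * exp (-(s * ε) / 4) := by
          rw [← exp_add, ← exp_add]; ring_nf
      _ ≤ δ * a * exp (-(s * ε) / 4) := by gcongr
      _ = δ * (a * exp (-(s * ε) / 4)) := by ring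
  calc mixDen g s ≤ Dn + ENNReal.ofReal (exp (-((s - 1) * ε) / 2)) := hg.mixDen_le_add hε hs1
    _ ≤ Dn + ENNReal.ofReal δ * ENNReal.ofReal (a * exp (-(s * ε) / 4)) := by
        rw [← ENNReal.ofReal_mul hδ.le]
        gcongr
    _ ≤ Dn + ENNReal.ofReal δ * Dn := by
        gcongr
        exact ha s (by linarith)
    _ = ENNReal.ofReal (1 + δ) * Dn := by
        rw [ENNReal.ofReal_add zero_le_one hδ.le, ENNReal.ofReal_one, add_mul, one_mul]

end nearZero

theorem MemA.of_comparable_near_zero {h h' : ℝ → ℝ} {ε c₁ c₂ δ l : ℝ} (hm : IsMixingDensity h)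
    (hm' : IsMixingDensity h') (hε : 0 < ε) (hc₁ : 0 < c₁) (hδ : 0 < δ)
    (hpos' : ∀ u ∈ Ioo 0 ε, 0 < h' u) (hlow : ∀ u ∈ Ioo 0 ε, c₁ * h' u ≤ h u)
    (hup : ∀ u ∈ Ioo 0 ε, h u ≤ c₂ * h' u) (hl : MemA h' l) :
    MemA h (c₂ * (1 + δ) * l / c₁) := by
  have hc₂ : 0 ≤ c₂ := by
    have hu : ε / 2 ∈ Ioo 0 ε := ⟨by linarith, by linarith⟩
    nlinarith [hlow _ hu, hup _ hu, hpos' _ hu]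
  have hl0 : 0 ≤ l := hl.1
  obtain ⟨k, hk0, hk⟩ := hl.exists_le_mul
  obtain ⟨K, hK0, hK⟩ := exists_exp_le_mul_mixIntegral_Ioo (1 / 2) hm'.1 hε hpos'
  have hDn : ∀ s, ENNReal.ofReal c₁ * mixIntegral (1 / 2) h' s (Ioo 0 ε) ≤ mixDen h s :=
    fun s => ofReal_mul_mixIntegral_Ioo_le_mixDen hε hc₁.le hlow
  refine memA_of_eventually_le_mul (k := (c₂ * (1 + δ) * k + ε ^ (-1 / 2 : ℝ) * K) / c₁) hm
    (by positivity) ?_ (fun s hs => ?_) ?_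
  · exact ne_top_of_le_ne_top (by finiteness [hl.mixNum_zero_ne_top hm'])
      (mixNum_le_of_le_mul hm hε hc₂ le_rfl hup)
  · have hKDn : 0 < ENNReal.ofReal K * mixIntegral (1 / 2) h' s (Ioo 0 ε) :=
      (ENNReal.ofReal_pos.2 (exp_pos _)).trans_le (hK s hs)
    exact (ENNReal.mul_pos (ENNReal.ofReal_pos.2 hc₁).ne'
      (right_ne_zero_of_mul hKDn.ne')).trans_le (hDn s)
  filter_upwards [hm'.eventually_mixDen_le hε hpos' hδ, eventually_ge_atTop 0] with s hD' hs
  set Dn := mixIntegral (1 / 2) h' s (Ioo 0 ε)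
  calc mixNum h s
      ≤ ENNReal.ofReal c₂ * mixNum h' s +
          ENNReal.ofReal (ε ^ (-1 / 2 : ℝ)) * ENNReal.ofReal (exp (-(s * ε) / 2)) := by
        rw [← ENNReal.ofReal_mul (by positivity)]
        exact mixNum_le_of_le_mul hm hε hc₂ hs hup
    _ ≤ ENNReal.ofReal c₂ * (ENNReal.ofReal (l * s + k) * (ENNReal.ofReal (1 + δ) * Dn)) +
          ENNReal.ofReal (ε ^ (-1 / 2 : ℝ)) * (ENNReal.ofReal K * Dn) := by
        gcongr
        · exact (hk s hs).trans (by gcongr)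
        · exact hK s hs
    _ = (ENNReal.ofReal (c₂ * ((l * s + k) * (1 + δ))) +
          ENNReal.ofReal (ε ^ (-1 / 2 : ℝ) * K)) * Dn := by
        rw [ENNReal.ofReal_mul hc₂, ENNReal.ofReal_mul (by positivity),
          ENNReal.ofReal_mul (by positivity)]
        ring
    _ = ENNReal.ofReal (c₂ * (1 + δ) * l / c₁ * s +
          (c₂ * (1 + δ) * k + ε ^ (-1 / 2 : ℝ) * K) / c₁) * (ENNReal.ofReal c₁ * Dn) := by
        rw [← ENNReal.ofReal_add (by positivity) (by positivity),
          ← mul_assoc _ (ENNReal.ofReal c₁), ← ENNReal.ofReal_mul (by positivity)]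
        congr 2
        field_simp
        ring
    _ ≤ _ := by gcongr; exact hDn s

lemma exists_Ioo_mul_le_of_tendsto_div {h h' : ℝ → ℝ} {L c₁ c₂ : ℝ}
    (hpos' : ∃ ε > 0, ∀ u ∈ Ioo (0 : ℝ) ε, 0 < h' u)
    (hlim : Tendsto (fun u => h u / h' u) (𝓝[>] 0) (𝓝 L))
    (hc₁ : c₁ < L) (hc₂ : L < c₂) :
    ∃ ε > 0, ∀ u ∈ Ioo 0 ε, 0 < h' u ∧ c₁ * h' u ≤ h u ∧ h u ≤ c₂ * h' u := by
  obtain ⟨ε₀, hε₀, hpos'⟩ := hpos'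
  have hev : ∀ᶠ u in 𝓝[>] 0, 0 < h' u ∧ h u / h' u ∈ Ioo c₁ c₂ :=
    (eventually_of_mem (Ioo_mem_nhdsGT hε₀) hpos').and (hlim (Ioo_mem_nhds hc₁ hc₂))
  obtain ⟨ε, hε, hsub⟩ := mem_nhdsGT_iff_exists_Ioo_subset.1 hev
  refine ⟨ε, hε, fun u hu => ?_⟩
  obtain ⟨hpos, hlow, hup⟩ := hsub hu
  exact ⟨hpos, ((lt_div_iff₀ hpos).1 hlow).le, ((div_lt_iff₀ hpos).1 hup).le⟩

lemma lambdaH_le_of_tendsto_div {h h' : ℝ → ℝ} {L : ℝ} (hm : IsMixingDensity h)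
    (hm' : IsMixingDensity h') (hpos' : ∃ ε > 0, ∀ u ∈ Ioo (0 : ℝ) ε, 0 < h' u)
    (hL : 0 < L) (hlim : Tendsto (fun u => h u / h' u) (𝓝[>] 0) (𝓝 L)) :
    lambdaH h ≤ lambdaH h' := by
  refine le_sInf ?_
  rintro _ ⟨l, hl, rfl⟩
  have hf : Tendsto (fun δ => (1 + δ) * L * (1 + δ) * l / ((1 - δ) * L)) (𝓝[>] 0) (𝓝 l) := by
    have hc : ContinuousAt (fun δ : ℝ => (1 + δ) * L * (1 + δ) * l / ((1 - δ) * L)) 0 :=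
      ContinuousAt.div (by fun_prop) (by fun_prop) (by simp [hL.ne'])
    simpa [hL.ne'] using hc.tendsto.mono_left nhdsWithin_le_nhds
  refine ge_of_tendsto (ENNReal.tendsto_ofReal hf) ?_
  filter_upwards [Ioo_mem_nhdsGT one_pos] with δ ⟨hδ0, hδ1⟩
  obtain ⟨ε, hε, hbounds⟩ := exists_Ioo_mul_le_of_tendsto_div hpos' hlim
    (c₁ := (1 - δ) * L) (c₂ := (1 + δ) * L) (by nlinarith) (by nlinarith)
  exact sInf_le ⟨_, MemA.of_comparable_near_zero hm hm' hε (by nlinarith) hδ0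
    (fun u hu => (hbounds u hu).1) (fun u hu => (hbounds u hu).2.1)
    (fun u hu => (hbounds u hu).2.2) hl, rfl⟩

/-- If two mixing densities `h`, `h̃` are strictly positive in a neighborhood of zero and
`h(u)/h̃(u)` converges, as `u → 0+`, to a limit in `(0,∞)`, then `λ_h = λ_h̃`. -/
theorem lambdaH_eq_of_tendsto_ratio (h h' : ℝ → ℝ)
    (hmix : IsMixingDensity h) (hmix' : IsMixingDensity h')
    (hpos : ∃ ε > 0, ∀ u ∈ Ioo (0:ℝ) ε, 0 < h u)
    (hpos' : ∃ ε > 0, ∀ u ∈ Ioo (0:ℝ) ε, 0 < h' u)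
    (hlim : ∃ L : ℝ, 0 < L ∧
      Filter.Tendsto (fun u => h u / h' u) (nhdsWithin 0 (Ioi (0:ℝ))) (nhds L)) :
    lambdaH h = lambdaH h' := by
  obtain ⟨L, hL, hlim⟩ := hlim
  refine le_antisymm (lambdaH_le_of_tendsto_div hmix hmix' hpos' hL hlim)
    (lambdaH_le_of_tendsto_div hmix' hmix hpos (inv_pos.2 hL) ?_)
  exact (hlim.inv₀ hL.ne').congr fun u => inv_div (h u) (h' u)
end

section
/- Let d be a positive integer and let h be a mixing density with ∫_0^∞ u^{d/2} h(u) du < ∞. Suppose h is polynomial near the origin with power c, i.e., h is strictly positive in a neighborhood of 0 and lim_{u→0+} h(u)/u^c exists in (0,∞), and suppose 2c + d > 0. Then for every λ > 1/(2c + d) there exists L ∈ ℝ such that for all s ≥ 0, ∫_0^∞ u^{(d-2)/2} e^{-su/2} h(u) du ≤ (λ s + L) · ∫_0^∞ u^{d/2} e^{-su/2} h(u) du. -/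
open MeasureTheory Set
open scoped ENNReal
open Filter Topology

/-!
Write `A(s)` and `B(s)` for the two integrals. Near the origin `h(u)` lies between `K u^c` and
`ρ K u^c`, with `ρ > 1` as close to `1` as we like, so on `(0, ε)` the two integrands are, up to
these constants, the Gamma kernels `u^{a-1} e^{-su/2}` and `u^a e^{-su/2}` with `a = c + d/2`.
Their integrals over `(0, ∞)` are `(2/s)^a Γ(a)` and `(2/s)^{a+1} Γ(a+1)`, with ratio
`s / (2a) = s / (2c + d)`, and for large `s` truncating the second to `(0, ε)` costs only a small
fraction of it. On `[ε, ∞)` the integrand of `A` is at most `ε⁻¹` times that of `B`. For bounded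
`s` the part of `A(s)` on `(0, ε)` stays bounded while `B(s)` stays bounded away from `0`.
-/

theorem lintegral_rpow_mul_exp_neg_mul_div_two_Ioi {a s : ℝ} (ha : 0 < a) (hs : 0 < s) :
    ∫⁻ u in Ioi 0, ENNReal.ofReal (u ^ (a - 1) * Real.exp (-(s * u) / 2))
      = ENNReal.ofReal ((2 / s) ^ a * Real.Gamma a) := by
  simp_rw [show ∀ u : ℝ, -(s * u) / 2 = -(s / 2 * u) from fun u => by ring]
  have hint : IntegrableOn (fun u : ℝ => u ^ (a - 1) * Real.exp (-(s / 2 * u))) (Ioi 0) := by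
    simpa using integrableOn_rpow_mul_exp_neg_mul_rpow (by linarith : -1 < a - 1) one_pos
      (by positivity : 0 < s / 2)
  rw [← ofReal_integral_eq_lintegral_ofReal hint, Real.integral_rpow_mul_exp_neg_mul_Ioi ha
    (by positivity), one_div_div]
  filter_upwards [ae_restrict_mem measurableSet_Ioi] with u (hu : 0 < u)
  positivity

noncomputable def lowerGammaLIntegral (ε a s : ℝ) : ℝ≥0∞ :=
  ∫⁻ u in Ioo 0 ε, ENNReal.ofReal (u ^ (a - 1) * Real.exp (-(s * u) / 2))

section

variable {ε a : ℝ}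

theorem lowerGammaLIntegral_le (ha : 0 < a) {s : ℝ} (hs : 0 < s) :
    lowerGammaLIntegral ε a s ≤ ENNReal.ofReal ((2 / s) ^ a * Real.Gamma a) :=
  (lintegral_mono_set Ioo_subset_Ioi_self).trans_eq
    (lintegral_rpow_mul_exp_neg_mul_div_two_Ioi ha hs)

theorem lowerGammaLIntegral_antitone : Antitone (lowerGammaLIntegral ε a) := by
  intro s₁ s₂ hs
  refine setLIntegral_mono' measurableSet_Ioo fun u hu => ?_
  have hu₀ : 0 < u := hu.1
  gcongr

theorem lowerGammaLIntegral_zero_lt_top (ha : 0 < a) : lowerGammaLIntegral ε a 0 < ⊤ := by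
  have hint : IntegrableOn (fun u : ℝ => u ^ (a - 1)) (Ioo 0 ε) :=
    (intervalIntegral.intervalIntegrable_rpow' (by linarith)).def'.mono_set
      (Ioo_subset_Ioc_self.trans Ioc_subset_uIoc)
  simpa [lowerGammaLIntegral] using hint.setLIntegral_lt_top

theorem eventually_ofReal_mul_le_lowerGammaLIntegral (ha : 0 < a) (hε : 0 < ε) {θ : ℝ}
    (hθ₀ : 0 ≤ θ) (hθ₁ : θ < 1) :
    ∀ᶠ s in atTop,
      ENNReal.ofReal (θ * ((2 / s) ^ a * Real.Gamma a)) ≤ lowerGammaLIntegral ε a s := by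
  have hdecay : Tendsto (fun s => Real.exp (-(s * ε) / 4) * 2 ^ a) atTop (𝓝 0) := by
    have := (Real.tendsto_exp_neg_atTop_nhds_zero.comp
      (tendsto_id.atTop_mul_const (by positivity : 0 < ε / 4))).mul_const ((2 : ℝ) ^ a)
    simpa [neg_div, mul_div_assoc] using this
  filter_upwards [eventually_gt_atTop 0, hdecay.eventually (eventually_le_nhds (sub_pos.2 hθ₁))]
    with s hs hsmall
  set g := (2 / s) ^ a * Real.Gamma a
  have hg : 0 ≤ g := by positivity
  -- On `[ε, ∞)` half of the exponential is at most `e^{-sε/4}`; the other half is again a Gamma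
  -- kernel.
  have htail : ∫⁻ u in Ici ε, ENNReal.ofReal (u ^ (a - 1) * Real.exp (-(s * u) / 2))
      ≤ ENNReal.ofReal ((1 - θ) * g) := calc
    _ ≤ ∫⁻ u in Ici ε, ENNReal.ofReal (Real.exp (-(s * ε) / 4)) *
          ENNReal.ofReal (u ^ (a - 1) * Real.exp (-(s / 2 * u) / 2)) := by
        refine setLIntegral_mono' measurableSet_Ici fun u hu => ?_
        have hu' : ε ≤ u := hu
        have hu₀ : 0 < u := hε.trans_le hu
        have hsplit : Real.exp (-(s * u) / 2)
            = Real.exp (-(s * u) / 4) * Real.exp (-(s / 2 * u) / 2) := by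
          rw [← Real.exp_add]; ring_nf
        rw [← ENNReal.ofReal_mul (Real.exp_pos _).le, hsplit, mul_left_comm]
        gcongr
    _ ≤ ENNReal.ofReal (Real.exp (-(s * ε) / 4)) *
          ∫⁻ u in Ioi 0, ENNReal.ofReal (u ^ (a - 1) * Real.exp (-(s / 2 * u) / 2)) := by
        rw [lintegral_const_mul' _ _ ENNReal.ofReal_ne_top]
        gcongr ENNReal.ofReal _ * ?_
        exact lintegral_mono_set (Ici_subset_Ioi.2 hε)
    _ = ENNReal.ofReal (Real.exp (-(s * ε) / 4) * 2 ^ a * g) := by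
        rw [lintegral_rpow_mul_exp_neg_mul_div_two_Ioi ha (by positivity),
          ← ENNReal.ofReal_mul (by positivity)]
        congr 1
        rw [show 2 / (s / 2) = 2 * (2 / s) by ring, Real.mul_rpow (by norm_num) (by positivity)]
        ring
    _ ≤ ENNReal.ofReal ((1 - θ) * g) := by gcongr
  have hfull : ENNReal.ofReal g ≤ lowerGammaLIntegral ε a s + ENNReal.ofReal ((1 - θ) * g) := by
    rw [← lintegral_rpow_mul_exp_neg_mul_div_two_Ioi ha hs, ← Ioo_union_Ici_eq_Ioi hε]
    exact (lintegral_union_le _ _ _).trans (add_le_add le_rfl htail)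
  refine ENNReal.le_of_add_le_add_right (a := ENNReal.ofReal ((1 - θ) * g)) ENNReal.ofReal_ne_top ?_
  rwa [← ENNReal.ofReal_add (by positivity) (by nlinarith), ← add_mul, add_sub_cancel, one_mul]

theorem exists_lowerGammaLIntegral_le_mul_add_one (ha : 0 < a) (hε : 0 < ε) {μ : ℝ}
    (hμ : 1 / (2 * a) < μ) :
    ∃ C ≥ 0, ∀ s, 0 ≤ s →
      lowerGammaLIntegral ε a s ≤ ENNReal.ofReal (μ * s + C) * lowerGammaLIntegral ε (a + 1) s := by
  have hμ₀ : 0 < μ := lt_trans (by positivity) hμ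
  have h2aμ : 1 < 2 * a * μ := by rwa [div_lt_iff₀' (by positivity)] at hμ
  set θ := 1 / (2 * a * μ)
  have hθ : θ < 1 := by rw [div_lt_one (by positivity)]; exact h2aμ
  obtain ⟨S, hS⟩ := eventually_atTop.1 ((eventually_gt_atTop 0).and
    (eventually_ofReal_mul_le_lowerGammaLIntegral (a := a + 1) (by linarith) hε (by positivity) hθ))
  have hS₀ : 0 < S := (hS S le_rfl).1
  set β := θ * ((2 / S) ^ (a + 1) * Real.Gamma (a + 1))
  set C₀ := (lowerGammaLIntegral ε a 0).toReal
  have hβ : 0 < β := by positivity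
  have hC : 0 ≤ C₀ / β := by positivity
  refine ⟨C₀ / β, hC, fun s hs => ?_⟩
  rcases le_total S s with hSs | hsS
  · have hs₀ : 0 < s := hS₀.trans_le hSs
    calc lowerGammaLIntegral ε a s ≤ ENNReal.ofReal ((2 / s) ^ a * Real.Gamma a) :=
          lowerGammaLIntegral_le ha hs₀
      _ = ENNReal.ofReal (μ * s) *
            ENNReal.ofReal (θ * ((2 / s) ^ (a + 1) * Real.Gamma (a + 1))) := by
          rw [← ENNReal.ofReal_mul (by positivity), Real.Gamma_add_one ha.ne',
            Real.rpow_add_one (by positivity)]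
          congr 1
          simp only [θ]
          field_simp
      _ ≤ ENNReal.ofReal (μ * s + C₀ / β) * lowerGammaLIntegral ε (a + 1) s := by
          gcongr
          · linarith
          · exact (hS s hSs).2
  · calc lowerGammaLIntegral ε a s ≤ lowerGammaLIntegral ε a 0 := lowerGammaLIntegral_antitone hs
      _ = ENNReal.ofReal (C₀ / β) * ENNReal.ofReal β := by
          rw [← ENNReal.ofReal_mul (by positivity), div_mul_cancel₀ _ hβ.ne',
            ENNReal.ofReal_toReal (lowerGammaLIntegral_zero_lt_top ha).ne]
      _ ≤ ENNReal.ofReal (μ * s + C₀ / β) * lowerGammaLIntegral ε (a + 1) s := by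
          gcongr
          · nlinarith
          · exact (hS S le_rfl).2.trans (lowerGammaLIntegral_antitone hsS)

noncomputable def laplaceMoment (h : ℝ → ℝ) (p s : ℝ) : ℝ≥0∞ :=
  ∫⁻ u in Ioi 0, ENNReal.ofReal (u ^ p * Real.exp (-(s * u) / 2) * h u)

variable {h : ℝ → ℝ} {p c K s : ℝ}

theorem ofReal_mul_lowerGammaLIntegral_le_laplaceMoment (hK : 0 ≤ K)
    (hlo : ∀ u ∈ Ioo 0 ε, K * u ^ c ≤ h u) :
    ENNReal.ofReal K * lowerGammaLIntegral ε (p + c + 1) s ≤ laplaceMoment h p s := by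
  rw [lowerGammaLIntegral, ← lintegral_const_mul' _ _ ENNReal.ofReal_ne_top]
  refine (setLIntegral_mono' measurableSet_Ioo fun u hu => ?_).trans
    (lintegral_mono_set Ioo_subset_Ioi_self)
  have hu₀ : 0 < u := hu.1
  rw [← ENNReal.ofReal_mul hK, add_sub_cancel_right, Real.rpow_add hu₀]
  refine ENNReal.ofReal_le_ofReal ?_
  calc K * (u ^ p * u ^ c * Real.exp (-(s * u) / 2))
      = (K * u ^ c) * (u ^ p * Real.exp (-(s * u) / 2)) := by ring
    _ ≤ h u * (u ^ p * Real.exp (-(s * u) / 2)) := by gcongr; exact hlo u hu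
    _ = u ^ p * Real.exp (-(s * u) / 2) * h u := by ring

theorem laplaceMoment_sub_one_le (hε : 0 < ε) (hK : 0 ≤ K)
    (hup : ∀ u ∈ Ioo 0 ε, h u ≤ K * u ^ c) :
    laplaceMoment h (p - 1) s ≤ ENNReal.ofReal K * lowerGammaLIntegral ε (p + c) s
      + ENNReal.ofReal ε⁻¹ * laplaceMoment h p s := by
  rw [laplaceMoment, ← Ioo_union_Ici_eq_Ioi hε]
  refine (lintegral_union_le _ _ _).trans (add_le_add ?_ ?_)
  · rw [lowerGammaLIntegral, ← lintegral_const_mul' _ _ ENNReal.ofReal_ne_top]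
    refine setLIntegral_mono' measurableSet_Ioo fun u hu => ?_
    have hu₀ : 0 < u := hu.1
    rw [← ENNReal.ofReal_mul hK]
    refine ENNReal.ofReal_le_ofReal ?_
    calc u ^ (p - 1) * Real.exp (-(s * u) / 2) * h u
        ≤ u ^ (p - 1) * Real.exp (-(s * u) / 2) * (K * u ^ c) := by gcongr; exact hup u hu
      _ = K * (u ^ (p + c - 1) * Real.exp (-(s * u) / 2)) := by
        rw [show p + c - 1 = p - 1 + c by ring, Real.rpow_add hu₀]; ring
  · rw [laplaceMoment, ← lintegral_const_mul' _ _ ENNReal.ofReal_ne_top]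
    refine (setLIntegral_mono' measurableSet_Ici fun u hu => ?_).trans
      (lintegral_mono_set (Ici_subset_Ioi.2 hε))
    have hu' : ε ≤ u := hu
    have hu₀ : 0 < u := hε.trans_le hu'
    rw [Real.rpow_sub_one hu₀.ne', show u ^ p / u * Real.exp (-(s * u) / 2) * h u
      = u⁻¹ * (u ^ p * Real.exp (-(s * u) / 2) * h u) by ring, ENNReal.ofReal_mul (by positivity)]
    gcongr

theorem exists_laplaceMoment_sub_one_le {ρ lam : ℝ} (hε : 0 < ε) (hK : 0 < K) (hρ : 0 < ρ)
    (hpc : 0 < p + c) (hband : ∀ u ∈ Ioo 0 ε, K * u ^ c ≤ h u ∧ h u ≤ ρ * K * u ^ c)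
    (hlam : ρ < 2 * (p + c) * lam) :
    ∃ L, ∀ s, 0 ≤ s →
      laplaceMoment h (p - 1) s ≤ ENNReal.ofReal (lam * s + L) * laplaceMoment h p s := by
  have hlam₀ : 0 < lam := by nlinarith
  obtain ⟨C, hC, hmodel⟩ := exists_lowerGammaLIntegral_le_mul_add_one (μ := lam / ρ) hpc hε
    (by rw [div_lt_div_iff₀ (by positivity) hρ]; linarith)
  refine ⟨ρ * C + ε⁻¹, fun s hs => ?_⟩
  calc laplaceMoment h (p - 1) s
      ≤ ENNReal.ofReal (ρ * K) * lowerGammaLIntegral ε (p + c) s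
        + ENNReal.ofReal ε⁻¹ * laplaceMoment h p s :=
        laplaceMoment_sub_one_le hε (by positivity) fun u hu => (hband u hu).2
    _ ≤ ENNReal.ofReal (ρ * K) *
          (ENNReal.ofReal (lam / ρ * s + C) * lowerGammaLIntegral ε (p + c + 1) s)
        + ENNReal.ofReal ε⁻¹ * laplaceMoment h p s := by gcongr; exact hmodel s hs
    _ = ENNReal.ofReal (lam * s + ρ * C) * (ENNReal.ofReal K * lowerGammaLIntegral ε (p + c + 1) s)
        + ENNReal.ofReal ε⁻¹ * laplaceMoment h p s := by
        rw [← mul_assoc, ← mul_assoc, ← ENNReal.ofReal_mul (by positivity),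
          ← ENNReal.ofReal_mul (by positivity)]
        congr 3
        field_simp
    _ ≤ ENNReal.ofReal (lam * s + ρ * C) * laplaceMoment h p s
        + ENNReal.ofReal ε⁻¹ * laplaceMoment h p s := by
        gcongr
        exact ofReal_mul_lowerGammaLIntegral_le_laplaceMoment hK.le fun u hu => (hband u hu).1
    _ = ENNReal.ofReal (lam * s + (ρ * C + ε⁻¹)) * laplaceMoment h p s := by
        rw [← add_mul, ← ENNReal.ofReal_add (by positivity) (by positivity), add_assoc]

theorem exists_Ioo_rpow_bounds_of_tendsto {L₀ ρ : ℝ} (hL₀ : 0 < L₀) (hρ : 1 < ρ)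
    (htend : Tendsto (fun u => h u / u ^ c) (𝓝[>] 0) (𝓝 L₀)) :
    ∃ K > 0, ∃ ε > 0, ∀ u ∈ Ioo 0 ε, K * u ^ c ≤ h u ∧ h u ≤ ρ * K * u ^ c := by
  set K := 2 * L₀ / (1 + ρ)
  have hK : 0 < K := by positivity
  have hKL : K < L₀ := by rw [div_lt_iff₀ (by positivity)]; nlinarith
  have hLK : L₀ < ρ * K := by rw [mul_div_assoc', lt_div_iff₀ (by positivity)]; nlinarith
  obtain ⟨ε, hε, hband⟩ := mem_nhdsGT_iff_exists_Ioo_subset.1 (htend (Ioo_mem_nhds hKL hLK))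
  refine ⟨K, hK, ε, hε, fun u hu => ?_⟩
  obtain ⟨hlo, hup⟩ := hband hu
  have huc : 0 < u ^ c := Real.rpow_pos_of_pos hu.1 c
  exact ⟨(le_div_iff₀ huc).1 hlo.le, (div_le_iff₀ huc).1 hup.le⟩

end

theorem polynomial_near_origin_drift_bound_general (d : ℕ) (h : ℝ → ℝ)
    (c : ℝ)
    (hlim : ∃ L₀ : ℝ, 0 < L₀ ∧
      Filter.Tendsto (fun u => h u / u ^ c) (nhdsWithin 0 (Ioi (0:ℝ))) (nhds L₀))
    (hcd : 0 < 2 * c + d) :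
    ∀ lam : ℝ, 1 / (2 * c + d) < lam → ∃ L : ℝ, ∀ s : ℝ, 0 ≤ s →
      (∫⁻ u in Ioi (0:ℝ),
          ENNReal.ofReal (u ^ (((d : ℝ) - 2) / 2) * Real.exp (-(s * u) / 2) * h u))
        ≤ ENNReal.ofReal (lam * s + L) *
          ∫⁻ u in Ioi (0:ℝ),
            ENNReal.ofReal (u ^ ((d : ℝ) / 2) * Real.exp (-(s * u) / 2) * h u) := by
  intro lam hlam
  obtain ⟨L₀, hL₀, htend⟩ := hlim
  have hR : 1 < 2 * (d / 2 + c) * lam := by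
    rw [div_lt_iff₀ hcd] at hlam; linarith
  obtain ⟨K, hK, ε, hε, hband⟩ :=
    exists_Ioo_rpow_bounds_of_tendsto (ρ := (1 + 2 * (d / 2 + c) * lam) / 2) hL₀ (by linarith) htend
  obtain ⟨L, hL⟩ := exists_laplaceMoment_sub_one_le (p := d / 2) (lam := lam) hε hK
    (by linarith) (by linarith) hband (by linarith)
  refine ⟨L, fun s hs => ?_⟩
  rw [show ((d : ℝ) - 2) / 2 = d / 2 - 1 by ring]
  exact hL s hs

/-- If the mixing density `h` satisfies condition `M`, is polynomial near the origin with
power `c` (with `2c + d > 0`), then for every `λ > 1/(2c+d)` there is `L ∈ ℝ` with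
`∫_0^∞ u^{(d-2)/2} e^{-su/2} h du ≤ (λ s + L) ∫_0^∞ u^{d/2} e^{-su/2} h du` for all `s ≥ 0`. -/
theorem polynomial_near_origin_drift_bound (d : ℕ) (hd : 0 < d) (h : ℝ → ℝ)
    (hmix : IsMixingDensity h)
    (hM : ∫⁻ u in Ioi (0:ℝ), ENNReal.ofReal (u ^ ((d : ℝ) / 2) * h u) < ⊤)
    (c : ℝ) (hc : -1 < c)
    (hpos : ∃ ε > 0, ∀ u ∈ Ioo (0:ℝ) ε, 0 < h u)
    (hlim : ∃ L₀ : ℝ, 0 < L₀ ∧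
      Filter.Tendsto (fun u => h u / u ^ c) (nhdsWithin 0 (Ioi (0:ℝ))) (nhds L₀))
    (hcd : 0 < 2 * c + d) :
    ∀ lam : ℝ, 1 / (2 * c + d) < lam → ∃ L : ℝ, ∀ s : ℝ, 0 ≤ s →
      (∫⁻ u in Ioi (0:ℝ),
          ENNReal.ofReal (u ^ (((d : ℝ) - 2) / 2) * Real.exp (-(s * u) / 2) * h u))
        ≤ ENNReal.ofReal (lam * s + L) *
          ∫⁻ u in Ioi (0:ℝ),
            ENNReal.ofReal (u ^ ((d : ℝ) / 2) * Real.exp (-(s * u) / 2) * h u) :=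
  polynomial_near_origin_drift_bound_general d h c hlim hcd
end

section
/- Let d be a positive integer and let h be a mixing density with ∫_0^∞ u^{d/2} h(u) du < ∞. Suppose h is faster than polynomial near the origin. Then for every λ > 0 there exists L ∈ ℝ such that for all s ≥ 0, ∫_0^∞ u^{(d-2)/2} e^{-su/2} h(u) du ≤ (λ s + L) · ∫_0^∞ u^{d/2} e^{-su/2} h(u) du. -/
open MeasureTheory Set
open scoped ENNReal

/-- A mixing density is faster than polynomial near the origin: it is strictly positive in a
neighborhood of `0` and, for every `c > 0`, `u ↦ h(u)/u^c` is strictly increasing on some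
interval `(0, η_c)`. -/
def FasterThanPolynomialNearOrigin (h : ℝ → ℝ) : Prop :=
  (∃ ε > 0, ∀ u ∈ Ioo (0:ℝ) ε, 0 < h u) ∧
    ∀ c : ℝ, 0 < c → ∃ η > 0, StrictMonoOn (fun u => h u / u ^ c) (Ioo (0:ℝ) η)

private lemma lintegral_rpow_Ioc_aux {t e : ℝ} (ht : 0 ≤ t) (he : -1 < e) :
    ∫⁻ u in Ioc (0:ℝ) t, ENNReal.ofReal (u ^ e) = ENNReal.ofReal (t ^ (e + 1) / (e + 1)) := by
  rw [← MeasureTheory.ofReal_integral_eq_lintegral_ofReal]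
  · rw [← intervalIntegral.integral_of_le ht, integral_rpow (Or.inl he),
      Real.zero_rpow (by linarith : e + 1 ≠ 0), sub_zero]
  · exact (intervalIntegrable_iff_integrableOn_Ioc_of_le ht).mp
      (intervalIntegral.intervalIntegrable_rpow' he)
  · filter_upwards [ae_restrict_mem measurableSet_Ioc] with u hu
    exact Real.rpow_nonneg hu.1.le e

set_option maxHeartbeats 1000000 in
/-- If the mixing density `h` satisfies condition `M` and is faster than polynomial near the
origin, then for every `λ > 0` there is `L ∈ ℝ` with
`∫_0^∞ u^{(d-2)/2} e^{-su/2} h du ≤ (λ s + L) ∫_0^∞ u^{d/2} e^{-su/2} h du` for all `s ≥ 0`. -/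
theorem faster_than_polynomial_drift_bound (d : ℕ) (hd : 0 < d) (h : ℝ → ℝ)
    (hmix : IsMixingDensity h)
    (hM : ∫⁻ u in Ioi (0:ℝ), ENNReal.ofReal (u ^ ((d : ℝ) / 2) * h u) < ⊤)
    (hfast : FasterThanPolynomialNearOrigin h) :
    ∀ lam : ℝ, 0 < lam → ∃ L : ℝ, ∀ s : ℝ, 0 ≤ s →
      (∫⁻ u in Ioi (0:ℝ),
          ENNReal.ofReal (u ^ (((d : ℝ) - 2) / 2) * Real.exp (-(s * u) / 2) * h u))
        ≤ ENNReal.ofReal (lam * s + L) *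
          ∫⁻ u in Ioi (0:ℝ),
            ENNReal.ofReal (u ^ ((d : ℝ) / 2) * Real.exp (-(s * u) / 2) * h u) := by
  obtain ⟨hmeas, hnn, -⟩ := hmix
  obtain ⟨⟨ε, hε, hpos⟩, hmono⟩ := hfast
  intro lam hlam
  have hd1 : (1:ℝ) ≤ (d:ℝ) := by exact_mod_cast hd
  set p1 : ℝ := ((d:ℝ) - 2) / 2 with hp1
  set p2 : ℝ := (d:ℝ) / 2 with hp2
  have hp2pos : 0 < p2 := by rw [hp2]; linarith
  have hp12 : p1 + 1 = p2 := by rw [hp1, hp2]; ring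
  set c : ℝ := max (Real.exp (2 / lam)) 1 with hc
  have hc1 : (1:ℝ) ≤ c := le_max_right _ _
  have hcexp : Real.exp (2 / lam) ≤ c := le_max_left _ _
  have hc0 : (0:ℝ) < c := lt_of_lt_of_le one_pos hc1
  obtain ⟨η₀, hη₀, hsm⟩ := hmono c hc0
  set η : ℝ := min η₀ ε with hηdef
  have hη : 0 < η := lt_min hη₀ hε
  have hηε : η ≤ ε := min_le_right _ _
  have hηη₀ : η ≤ η₀ := min_le_left _ _
  have hposη : ∀ u ∈ Ioo (0:ℝ) η, 0 < h u := fun u hu =>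
    hpos u ⟨hu.1, lt_of_lt_of_le hu.2 hηε⟩
  -- key comparison from strict monotonicity of h u / u ^ c
  have key : ∀ u v : ℝ, 0 < u → u ≤ v → v < η → h u ≤ h v * (u / v) ^ c := by
    intro u v hu huv hv
    have hvpos : 0 < v := lt_of_lt_of_le hu huv
    rcases eq_or_lt_of_le huv with rfl | hlt
    · rw [div_self (ne_of_gt hu), Real.one_rpow, mul_one]
    · have h1 : h u / u ^ c ≤ h v / v ^ c :=
        (hsm ⟨hu, lt_of_lt_of_le (hlt.trans hv) hηη₀⟩
          ⟨hvpos, lt_of_lt_of_le hv hηη₀⟩ hlt).le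
      have hu0 : (0:ℝ) < u ^ c := Real.rpow_pos_of_pos hu c
      have hv0 : (0:ℝ) < v ^ c := Real.rpow_pos_of_pos hvpos c
      have h2 : h u = h u / u ^ c * u ^ c := by field_simp
      rw [h2, Real.div_rpow hu.le hvpos.le]
      calc h u / u ^ c * u ^ c ≤ h v / v ^ c * u ^ c :=
            mul_le_mul_of_nonneg_right h1 hu0.le
        _ = h v * (u ^ c / v ^ c) := by ring
  -- key positivity lower bound
  have lower : ∀ t s : ℝ, 0 < t → 2 * t < η → 0 ≤ s →
      ENNReal.ofReal (h t * t ^ p2 * Real.exp (-(s * t)) * t) ≤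
        ∫⁻ u in Ioi (0:ℝ), ENNReal.ofReal (u ^ p2 * Real.exp (-(s * u) / 2) * h u) := by
    intro t s ht ht2 hs
    have hht : 0 ≤ h t := hnn t ht
    have hm0 : 0 ≤ h t * t ^ p2 * Real.exp (-(s * t)) := by positivity
    calc ENNReal.ofReal (h t * t ^ p2 * Real.exp (-(s * t)) * t)
        = ENNReal.ofReal (h t * t ^ p2 * Real.exp (-(s * t))) * volume (Ioo t (2 * t)) := by
          rw [Real.volume_Ioo, ENNReal.ofReal_mul hm0]
          congr 2
          ring
      _ = ∫⁻ _ in Ioo t (2 * t), ENNReal.ofReal (h t * t ^ p2 * Real.exp (-(s * t))) :=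
          (setLIntegral_const _ _).symm
      _ ≤ ∫⁻ u in Ioo t (2 * t), ENNReal.ofReal (u ^ p2 * Real.exp (-(s * u) / 2) * h u) := by
          refine setLIntegral_mono' measurableSet_Ioo fun u hu => ?_
          refine ENNReal.ofReal_le_ofReal ?_
          have hu0 : 0 < u := ht.trans hu.1
          have hhu : h t ≤ h u := by
            have := key t u ht hu.1.le (hu.2.trans ht2)
            refine this.trans ?_
            have : (t / u) ^ c ≤ 1 :=
              Real.rpow_le_one (by positivity) (div_le_one_of_le₀ hu.1.le hu0.le) hc0.le
            have hh2 : 0 ≤ h u := hnn u (Set.mem_Ioi.mpr hu0)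
            nlinarith
          have hrp : t ^ p2 ≤ u ^ p2 := Real.rpow_le_rpow ht.le hu.1.le hp2pos.le
          have hexp : Real.exp (-(s * t)) ≤ Real.exp (-(s * u) / 2) := by
            refine Real.exp_le_exp.mpr ?_
            have : s * u ≤ s * (2 * t) := mul_le_mul_of_nonneg_left hu.2.le hs
            linarith
          have h1 : 0 ≤ u ^ p2 := Real.rpow_nonneg hu0.le _
          have h2 : 0 ≤ Real.exp (-(s * u) / 2) := (Real.exp_pos _).le
          have h3 : 0 ≤ h u := hnn u (Set.mem_Ioi.mpr hu0)
          calc h t * t ^ p2 * Real.exp (-(s * t))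
              ≤ h u * u ^ p2 * Real.exp (-(s * u) / 2) :=
                mul_le_mul (mul_le_mul hhu hrp (Real.rpow_nonneg ht.le _) h3) hexp
                  (Real.exp_pos _).le (mul_nonneg h3 h1)
            _ = u ^ p2 * Real.exp (-(s * u) / 2) * h u := by ring
      _ ≤ ∫⁻ u in Ioi (0:ℝ), ENNReal.ofReal (u ^ p2 * Real.exp (-(s * u) / 2) * h u) :=
          lintegral_mono_set fun u hu => ht.trans hu.1
  -- small u part bound
  have small : ∀ t s : ℝ, 0 < t → t < η → 0 ≤ s →
      ∫⁻ u in Ioc (0:ℝ) t, ENNReal.ofReal (u ^ p1 * Real.exp (-(s * u) / 2) * h u) ≤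
        ENNReal.ofReal (h t * t ^ p2 / (p2 + c)) := by
    intro t s ht htη hs
    have hht : 0 ≤ h t := hnn t ht
    have htc : (0:ℝ) < t ^ c := Real.rpow_pos_of_pos ht c
    have he : -1 < p1 + c := by rw [hp1]; linarith
    calc ∫⁻ u in Ioc (0:ℝ) t, ENNReal.ofReal (u ^ p1 * Real.exp (-(s * u) / 2) * h u)
        ≤ ∫⁻ u in Ioc (0:ℝ) t, ENNReal.ofReal (h t / t ^ c * u ^ (p1 + c)) := by
          refine setLIntegral_mono' measurableSet_Ioc fun u hu => ?_
          refine ENNReal.ofReal_le_ofReal ?_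
          have hu0 : 0 < u := hu.1
          have hhu : h u ≤ h t * (u / t) ^ c := key u t hu0 hu.2 htη
          have hexp : Real.exp (-(s * u) / 2) ≤ 1 := by
            rw [Real.exp_le_one_iff]
            have : 0 ≤ s * u := mul_nonneg hs hu0.le
            linarith
          have h1 : 0 ≤ u ^ p1 := Real.rpow_nonneg hu0.le _
          have h2 : 0 ≤ h u := hnn u (Set.mem_Ioi.mpr hu0)
          have h3 : u ^ p1 * Real.exp (-(s * u) / 2) * h u ≤ u ^ p1 * h u := by
            have := mul_le_mul_of_nonneg_left hexp h1
            have := mul_le_mul_of_nonneg_right this h2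
            calc u ^ p1 * Real.exp (-(s * u) / 2) * h u ≤ u ^ p1 * 1 * h u := by
                  exact mul_le_mul_of_nonneg_right (mul_le_mul_of_nonneg_left hexp h1) h2
              _ = u ^ p1 * h u := by ring
          refine h3.trans ?_
          have h4 : u ^ p1 * h u ≤ u ^ p1 * (h t * (u / t) ^ c) :=
            mul_le_mul_of_nonneg_left hhu h1
          refine h4.trans (le_of_eq ?_)
          rw [Real.div_rpow hu0.le ht.le, Real.rpow_add hu0]
          field_simp
      _ = ENNReal.ofReal (h t / t ^ c) * ∫⁻ u in Ioc (0:ℝ) t, ENNReal.ofReal (u ^ (p1 + c)) := by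
          rw [← lintegral_const_mul' _ _ ENNReal.ofReal_ne_top]
          congr 1 with u
          rw [ENNReal.ofReal_mul (by positivity)]
      _ = ENNReal.ofReal (h t / t ^ c) * ENNReal.ofReal (t ^ (p1 + c + 1) / (p1 + c + 1)) := by
          rw [lintegral_rpow_Ioc_aux ht.le he]
      _ = ENNReal.ofReal (h t / t ^ c * (t ^ (p1 + c + 1) / (p1 + c + 1))) :=
          (ENNReal.ofReal_mul (by positivity)).symm
      _ = ENNReal.ofReal (h t * t ^ p2 / (p2 + c)) := by
          congr 1
          have h5 : p1 + c + 1 = p2 + c := by linarith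
          rw [h5, Real.rpow_add ht]
          field_simp
  -- large u part bound
  have large : ∀ t s : ℝ, 0 < t →
      ∫⁻ u in Ioi t, ENNReal.ofReal (u ^ p1 * Real.exp (-(s * u) / 2) * h u) ≤
        ENNReal.ofReal (1 / t) *
          ∫⁻ u in Ioi (0:ℝ), ENNReal.ofReal (u ^ p2 * Real.exp (-(s * u) / 2) * h u) := by
    intro t s ht
    calc ∫⁻ u in Ioi t, ENNReal.ofReal (u ^ p1 * Real.exp (-(s * u) / 2) * h u)
        ≤ ∫⁻ u in Ioi t, ENNReal.ofReal (1 / t * (u ^ p2 * Real.exp (-(s * u) / 2) * h u)) := by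
          refine setLIntegral_mono' measurableSet_Ioi fun u hu => ?_
          refine ENNReal.ofReal_le_ofReal ?_
          have hu0 : 0 < u := ht.trans hu
          have h0 : u ^ p1 = u ^ p2 / u := by
            rw [← hp12, Real.rpow_add hu0, Real.rpow_one]
            field_simp
          have h1 : u ^ p2 / u ≤ u ^ p2 / t :=
            div_le_div_of_nonneg_left (Real.rpow_nonneg hu0.le _) ht (le_of_lt hu)
          have h2 : 0 ≤ Real.exp (-(s * u) / 2) := (Real.exp_pos _).le
          have h3 : 0 ≤ h u := hnn u (Set.mem_Ioi.mpr hu0)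
          calc u ^ p1 * Real.exp (-(s * u) / 2) * h u
              ≤ u ^ p2 / t * Real.exp (-(s * u) / 2) * h u := by
                rw [h0]
                exact mul_le_mul_of_nonneg_right
                  (mul_le_mul_of_nonneg_right h1 h2) h3
            _ = 1 / t * (u ^ p2 * Real.exp (-(s * u) / 2) * h u) := by ring
      _ = ENNReal.ofReal (1 / t) *
            ∫⁻ u in Ioi t, ENNReal.ofReal (u ^ p2 * Real.exp (-(s * u) / 2) * h u) := by
          rw [← lintegral_const_mul' _ _ ENNReal.ofReal_ne_top]
          congr 1 with u
          rw [ENNReal.ofReal_mul (by positivity)]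
      _ ≤ ENNReal.ofReal (1 / t) *
            ∫⁻ u in Ioi (0:ℝ), ENNReal.ofReal (u ^ p2 * Real.exp (-(s * u) / 2) * h u) :=
          mul_le_mul_right (lintegral_mono_set fun u hu => ht.trans hu) _
  -- splitting
  have split : ∀ (t : ℝ), 0 < t → ∀ (g : ℝ → ℝ≥0∞),
      ∫⁻ u in Ioi (0:ℝ), g u = (∫⁻ u in Ioc (0:ℝ) t, g u) + ∫⁻ u in Ioi t, g u := by
    intro t ht g
    rw [← Ioc_union_Ioi_eq_Ioi ht.le, lintegral_union measurableSet_Ioi Ioc_disjoint_Ioi_same]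
  -- monotonicity in s
  have mono_s : ∀ p s s' : ℝ, 0 ≤ s → s ≤ s' →
      (∫⁻ u in Ioi (0:ℝ), ENNReal.ofReal (u ^ p * Real.exp (-(s' * u) / 2) * h u)) ≤
        ∫⁻ u in Ioi (0:ℝ), ENNReal.ofReal (u ^ p * Real.exp (-(s * u) / 2) * h u) := by
    intro p s s' hs hss'
    refine setLIntegral_mono' measurableSet_Ioi fun u hu => ?_
    refine ENNReal.ofReal_le_ofReal ?_
    have hu0 : 0 < u := hu
    have hexp : Real.exp (-(s' * u) / 2) ≤ Real.exp (-(s * u) / 2) := by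
      refine Real.exp_le_exp.mpr ?_
      have : s * u ≤ s' * u := mul_le_mul_of_nonneg_right hss' hu0.le
      linarith
    have h1 : 0 ≤ u ^ p := Real.rpow_nonneg hu0.le _
    have h2 : 0 ≤ h u := hnn u hu
    exact mul_le_mul_of_nonneg_right (mul_le_mul_of_nonneg_left hexp h1) h2
  -- value at s = 0 for p2
  have Jzero : (∫⁻ u in Ioi (0:ℝ), ENNReal.ofReal (u ^ p2 * Real.exp (-(0 * u) / 2) * h u)) =
      ∫⁻ u in Ioi (0:ℝ), ENNReal.ofReal (u ^ p2 * h u) := by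
    simp only [zero_mul, neg_zero, zero_div, Real.exp_zero, mul_one]
  have J2fin : ∀ s : ℝ, 0 ≤ s →
      (∫⁻ u in Ioi (0:ℝ), ENNReal.ofReal (u ^ p2 * Real.exp (-(s * u) / 2) * h u)) < ⊤ :=
    fun s hs => lt_of_le_of_lt ((mono_s p2 0 s le_rfl hs).trans Jzero.le) hM
  -- parameters
  set t₀ : ℝ := η / 4 with ht₀def
  have ht₀ : 0 < t₀ := by positivity
  have ht₀2 : 2 * t₀ < η := by rw [ht₀def]; linarith
  have ht₀η : t₀ < η := by rw [ht₀def]; linarith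
  set S : ℝ := 8 / (lam * η) with hSdef
  have hS : 0 < S := by positivity
  -- N : value at s = 0 for p1, finite
  set N : ℝ≥0∞ := ∫⁻ u in Ioi (0:ℝ), ENNReal.ofReal (u ^ p1 * Real.exp (-(0 * u) / 2) * h u)
    with hNdef
  have hNfin : N < ⊤ := by
    rw [hNdef, split t₀ ht₀]
    refine ENNReal.add_lt_top.mpr ⟨lt_of_le_of_lt (small t₀ 0 ht₀ ht₀η le_rfl)
      ENNReal.ofReal_lt_top, ?_⟩
    refine lt_of_le_of_lt (large t₀ 0 ht₀) ?_
    exact ENNReal.mul_lt_top ENNReal.ofReal_lt_top (J2fin 0 le_rfl)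
  -- M : value at s = S for p2, positive and finite
  set M : ℝ≥0∞ := ∫⁻ u in Ioi (0:ℝ), ENNReal.ofReal (u ^ p2 * Real.exp (-(S * u) / 2) * h u)
    with hMdef
  have hMpos : 0 < M := by
    refine lt_of_lt_of_le ?_ (lower t₀ S ht₀ ht₀2 hS.le)
    refine ENNReal.ofReal_pos.mpr ?_
    have := hposη t₀ ⟨ht₀, ht₀η⟩
    positivity
  have hMfin : M < ⊤ := J2fin S hS.le
  set n : ℝ := N.toReal with hndef
  set m : ℝ := M.toReal with hmdef
  have hm : 0 < m := ENNReal.toReal_pos hMpos.ne' hMfin.ne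
  have hn : 0 ≤ n := ENNReal.toReal_nonneg
  refine ⟨n / m, ?_⟩
  intro s hs
  have hL : 0 ≤ n / m := by positivity
  rcases le_or_gt S s with hSs | hSs
  · -- large s case
    have hspos : 0 < s := lt_of_lt_of_le hS hSs
    set t : ℝ := 2 / (lam * s) with htdef
    have ht : 0 < t := by positivity
    have htt₀ : t ≤ t₀ := by
      rw [htdef, ht₀def]
      rw [div_le_div_iff₀ (by positivity) (by norm_num : (0:ℝ) < 4)]
      have : 8 / (lam * η) ≤ s := hSs
      rw [div_le_iff₀ (by positivity)] at this
      nlinarith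
    have ht2 : 2 * t < η := by linarith
    have htη : t < η := by linarith
    have hinv : 1 / t = lam * s / 2 := by
      rw [htdef]
      field_simp
    have hst : s * t = 2 / lam := by
      rw [htdef]
      field_simp
    -- real inequality for the small part
    have hreal : h t * t ^ p2 / (p2 + c) ≤
        lam * s / 2 * (h t * t ^ p2 * Real.exp (-(s * t)) * t) := by
      have hht : 0 ≤ h t := hnn t ht
      have htp : 0 ≤ t ^ p2 := Real.rpow_nonneg ht.le _
      have h1 : lam * s / 2 * t = 1 := by rw [htdef]; field_simp
      have h2 : Real.exp (-(s * t)) = (Real.exp (2 / lam))⁻¹ := by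
        rw [hst, ← Real.exp_neg]
      have h3 : (0:ℝ) < Real.exp (2 / lam) := Real.exp_pos _
      have h4 : Real.exp (2 / lam) ≤ p2 + c := by linarith
      have h5 : 1 / (p2 + c) ≤ (Real.exp (2 / lam))⁻¹ := by
        rw [one_div]
        exact inv_anti₀ h3 h4
      calc h t * t ^ p2 / (p2 + c) = h t * t ^ p2 * (1 / (p2 + c)) := by ring
        _ ≤ h t * t ^ p2 * (Real.exp (2 / lam))⁻¹ :=
            mul_le_mul_of_nonneg_left h5 (by positivity)
        _ = lam * s / 2 * (h t * t ^ p2 * Real.exp (-(s * t)) * t) := by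
            rw [h2, htdef]
            have hs0 : s ≠ 0 := hspos.ne'
            have hl0 : lam ≠ 0 := hlam.ne'
            field_simp
    calc (∫⁻ u in Ioi (0:ℝ), ENNReal.ofReal (u ^ p1 * Real.exp (-(s * u) / 2) * h u))
        = (∫⁻ u in Ioc (0:ℝ) t, ENNReal.ofReal (u ^ p1 * Real.exp (-(s * u) / 2) * h u))
          + ∫⁻ u in Ioi t, ENNReal.ofReal (u ^ p1 * Real.exp (-(s * u) / 2) * h u) :=
          split t ht _
      _ ≤ ENNReal.ofReal (lam * s / 2) *
            (∫⁻ u in Ioi (0:ℝ), ENNReal.ofReal (u ^ p2 * Real.exp (-(s * u) / 2) * h u))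
          + ENNReal.ofReal (lam * s / 2) *
            (∫⁻ u in Ioi (0:ℝ), ENNReal.ofReal (u ^ p2 * Real.exp (-(s * u) / 2) * h u)) := by
          refine add_le_add ?_ ?_
          · refine (small t s ht htη hs).trans ?_
            refine le_trans (ENNReal.ofReal_le_ofReal hreal) ?_
            rw [ENNReal.ofReal_mul (by positivity)]
            exact mul_le_mul_right (lower t s ht ht2 hs) _
          · refine (large t s ht).trans ?_
            rw [hinv]
      _ = ENNReal.ofReal (lam * s) *
            ∫⁻ u in Ioi (0:ℝ), ENNReal.ofReal (u ^ p2 * Real.exp (-(s * u) / 2) * h u) := by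
          rw [← add_mul, ← ENNReal.ofReal_add (by positivity) (by positivity)]
          norm_num
      _ ≤ ENNReal.ofReal (lam * s + n / m) *
            ∫⁻ u in Ioi (0:ℝ), ENNReal.ofReal (u ^ p2 * Real.exp (-(s * u) / 2) * h u) :=
          mul_le_mul_left (ENNReal.ofReal_le_ofReal (by linarith)) _
  · -- small s case
    calc (∫⁻ u in Ioi (0:ℝ), ENNReal.ofReal (u ^ p1 * Real.exp (-(s * u) / 2) * h u))
        ≤ N := mono_s p1 0 s le_rfl hs
      _ = ENNReal.ofReal n := by rw [hndef, ENNReal.ofReal_toReal hNfin.ne]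
      _ = ENNReal.ofReal (n / m) * ENNReal.ofReal m := by
          rw [← ENNReal.ofReal_mul hL, div_mul_cancel₀ n hm.ne']
      _ = ENNReal.ofReal (n / m) * M := by rw [hmdef, ENNReal.ofReal_toReal hMfin.ne]
      _ ≤ ENNReal.ofReal (n / m) *
            ∫⁻ u in Ioi (0:ℝ), ENNReal.ofReal (u ^ p2 * Real.exp (-(s * u) / 2) * h u) :=
          mul_le_mul_right (mono_s p2 s S hs hSs.le) _
      _ ≤ ENNReal.ofReal (lam * s + n / m) *
            ∫⁻ u in Ioi (0:ℝ), ENNReal.ofReal (u ^ p2 * Real.exp (-(s * u) / 2) * h u) := by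
          refine mul_le_mul_left (ENNReal.ofReal_le_ofReal ?_) _
          have : 0 ≤ lam * s := mul_nonneg hlam.le hs
          linarith
end

section
/- Let d be a positive integer. Let h_1, …, h_M be finitely many mixing densities, each satisfying ∫_0^∞ u^{d/2} h_i(u) du < ∞, and each either zero near the origin or faster than polynomial near the origin. Let w_1, …, w_M > 0 with w_1 + ⋯ + w_M = 1, and set h(u) = Σ_{i=1}^M w_i h_i(u). Then for every λ > 0 there exists L ∈ ℝ such that for all s ≥ 0, ∫_0^∞ u^{(d-2)/2} e^{-su/2} h(u) du ≤ (λ s + L) · ∫_0^∞ u^{d/2} e^{-su/2} h(u) du. -/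
open MeasureTheory Set
open scoped ENNReal

/-- A mixing density is zero near the origin if it vanishes on some interval `(0, δ)`. -/
def ZeroNearOrigin (h : ℝ → ℝ) : Prop :=
  ∃ δ > 0, ∀ u ∈ Ioo (0:ℝ) δ, h u = 0

/-! Split the numerator at a point `t > 0`. Beyond `t`, `u ^ (p - 1) ≤ u ^ p / t`, so that part
costs a factor `1 / t`. Below `t` the density either vanishes or satisfies `g u ≤ g t (u / t) ^ c`;
then the part below `t` is at most `t ^ p g t / (p + c)`, while the denominator is at least
`e ^ (-s t) t ^ (p + 1) g t`, coming from `(t, 2t]` where `g` is increasing. For `c = e ^ (2 / λ)`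
and `s t ≤ 2 / λ` the two parts together cost at most `2 / t`, and `t = 1 / (1 / a + λ s / 2)`
with `a` small gives `2 / t = λ s + 2 / a`. Finite mixtures inherit the bound with the largest of
the constants. -/

noncomputable def dampedMoment (g : ℝ → ℝ) (q s : ℝ) (A : Set ℝ) : ℝ≥0∞ :=
  ∫⁻ u in A, ENNReal.ofReal (u ^ q * Real.exp (-(s * u) / 2) * g u)

def HasDriftBound (g : ℝ → ℝ) (p lam : ℝ) : Prop :=
  ∃ L : ℝ, ∀ s : ℝ, 0 ≤ s →
    dampedMoment g (p - 1) s (Ioi 0) ≤ ENNReal.ofReal (lam * s + L) * dampedMoment g p s (Ioi 0)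

theorem lintegral_Ioo_rpow {t q : ℝ} (ht : 0 < t) (hq : -1 < q) :
    ∫⁻ u in Ioo (0 : ℝ) t, ENNReal.ofReal (u ^ q) = ENNReal.ofReal (t ^ (q + 1) / (q + 1)) := by
  have hint : IntegrableOn (fun u : ℝ => u ^ q) (Ioc 0 t) := by
    simpa only [intervalIntegrable_iff, uIoc_of_le ht.le] using
      intervalIntegral.intervalIntegrable_rpow' (a := 0) (b := t) hq
  rw [setLIntegral_congr Ioo_ae_eq_Ioc, ← ofReal_integral_eq_lintegral_ofReal hint,
    ← intervalIntegral.integral_of_le ht.le, integral_rpow (Or.inl hq),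
    Real.zero_rpow (by linarith), sub_zero]
  filter_upwards [self_mem_ae_restrict measurableSet_Ioc] with u hu using
    Real.rpow_nonneg hu.1.le q

section DampedMoment

variable {g : ℝ → ℝ} {p q s t : ℝ}

theorem dampedMoment_Ioi_eq_add (ht : 0 < t) :
    dampedMoment g q s (Ioi 0) = dampedMoment g q s (Ioo 0 t) + dampedMoment g q s (Ici t) := by
  rw [dampedMoment, ← Ioo_union_Ici_eq_Ioi ht,
    lintegral_union measurableSet_Ici (disjoint_left.2 fun _ hu hu' => not_le.2 hu.2 hu')]
  rfl

theorem dampedMoment_Ioo_eq_zero (hg : ∀ u ∈ Ioo 0 t, g u = 0) :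
    dampedMoment g q s (Ioo 0 t) = 0 := by
  rw [dampedMoment, setLIntegral_congr_fun measurableSet_Ioo (g := fun _ => 0)
    fun u hu => by simp only [hg u hu, mul_zero, ENNReal.ofReal_zero], lintegral_zero]

theorem dampedMoment_Ici_le (hg : ∀ u ∈ Ioi 0, 0 ≤ g u) (ht : 0 < t) :
    dampedMoment g (p - 1) s (Ici t) ≤ ENNReal.ofReal (1 / t) * dampedMoment g p s (Ioi 0) := by
  calc dampedMoment g (p - 1) s (Ici t)
      ≤ ∫⁻ u in Ici t, ENNReal.ofReal (1 / t) *
          ENNReal.ofReal (u ^ p * Real.exp (-(s * u) / 2) * g u) := by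
        refine setLIntegral_mono' measurableSet_Ici fun u (hu : t ≤ u) => ?_
        have hu0 : 0 < u := ht.trans_le hu
        have hpow : u ^ (p - 1) ≤ u ^ p / t := by
          rw [Real.rpow_sub_one hu0.ne']
          exact div_le_div_of_nonneg_left (Real.rpow_nonneg hu0.le p) ht hu
        rw [← ENNReal.ofReal_mul (by positivity)]
        refine ENNReal.ofReal_le_ofReal ?_
        calc u ^ (p - 1) * Real.exp (-(s * u) / 2) * g u
            ≤ u ^ p / t * Real.exp (-(s * u) / 2) * g u := by
              gcongr
              exact hg u hu0
          _ = 1 / t * (u ^ p * Real.exp (-(s * u) / 2) * g u) := by ring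
    _ = ENNReal.ofReal (1 / t) * dampedMoment g p s (Ici t) :=
        lintegral_const_mul' _ _ ENNReal.ofReal_ne_top
    _ ≤ ENNReal.ofReal (1 / t) * dampedMoment g p s (Ioi 0) :=
        mul_le_mul_right (lintegral_mono_set (Ici_subset_Ioi.2 ht)) _

theorem dampedMoment_Ioo_le_of_monotoneOn_div_rpow {c η : ℝ}
    (hg : MonotoneOn (fun u => g u / u ^ c) (Ioo 0 η)) (ht : t ∈ Ioo 0 η) (hgt : 0 ≤ g t)
    (hpc : 0 < p + c) (hs : 0 ≤ s) :
    dampedMoment g (p - 1) s (Ioo 0 t) ≤ ENNReal.ofReal (t ^ p * g t / (p + c)) := by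
  have htc : 0 < t ^ c := Real.rpow_pos_of_pos ht.1 c
  calc dampedMoment g (p - 1) s (Ioo 0 t)
      ≤ ∫⁻ u in Ioo 0 t, ENNReal.ofReal (g t / t ^ c) * ENNReal.ofReal (u ^ (p - 1 + c)) := by
        refine setLIntegral_mono' measurableSet_Ioo fun u hu => ?_
        have huc : 0 < u ^ c := Real.rpow_pos_of_pos hu.1 c
        have hgu : g u ≤ g t / t ^ c * u ^ c :=
          (div_le_iff₀ huc).1 (hg ⟨hu.1, hu.2.trans ht.2⟩ ht hu.2.le)
        have hexp : Real.exp (-(s * u) / 2) ≤ 1 := by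
          rw [Real.exp_le_one_iff]
          nlinarith [hu.1]
        have hpow : 0 ≤ u ^ (p - 1) := Real.rpow_nonneg hu.1.le _
        rw [← ENNReal.ofReal_mul (by positivity)]
        refine ENNReal.ofReal_le_ofReal ?_
        calc u ^ (p - 1) * Real.exp (-(s * u) / 2) * g u
            ≤ u ^ (p - 1) * Real.exp (-(s * u) / 2) * (g t / t ^ c * u ^ c) := by gcongr
          _ ≤ u ^ (p - 1) * 1 * (g t / t ^ c * u ^ c) := by gcongr
          _ = g t / t ^ c * u ^ (p - 1 + c) := by rw [Real.rpow_add hu.1]; ring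
    _ = ENNReal.ofReal (g t / t ^ c) * ENNReal.ofReal (t ^ (p + c) / (p + c)) := by
        rw [lintegral_const_mul' _ _ ENNReal.ofReal_ne_top,
          lintegral_Ioo_rpow ht.1 (by linarith), show p - 1 + c + 1 = p + c by ring]
    _ = ENNReal.ofReal (t ^ p * g t / (p + c)) := by
        rw [← ENNReal.ofReal_mul (by positivity), Real.rpow_add ht.1]
        congr 1
        field_simp

theorem ofReal_le_dampedMoment (ht : 0 < t) (hp : 0 ≤ p) (hs : 0 ≤ s) (hgt : 0 ≤ g t)
    (hg : ∀ u ∈ Ioc t (2 * t), g t ≤ g u) :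
    ENNReal.ofReal (t ^ (p + 1) * Real.exp (-(s * t)) * g t) ≤ dampedMoment g p s (Ioi 0) := by
  calc ENNReal.ofReal (t ^ (p + 1) * Real.exp (-(s * t)) * g t)
      = ∫⁻ _ in Ioc t (2 * t), ENNReal.ofReal (t ^ p * Real.exp (-(s * t)) * g t) := by
        rw [setLIntegral_const, Real.volume_Ioc, ← ENNReal.ofReal_mul (by positivity),
          Real.rpow_add_one ht.ne']
        ring_nf
    _ ≤ dampedMoment g p s (Ioc t (2 * t)) := by
        refine setLIntegral_mono' measurableSet_Ioc fun u hu => ENNReal.ofReal_le_ofReal ?_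
        have hexp : Real.exp (-(s * t)) ≤ Real.exp (-(s * u) / 2) := by
          rw [Real.exp_le_exp]
          nlinarith [hu.2]
        have hu0 : 0 < u := ht.trans hu.1
        gcongr
        · exact hu.1.le
        · exact hg u hu
    _ ≤ dampedMoment g p s (Ioi 0) := lintegral_mono_set fun _ hu => ht.trans hu.1

end DampedMoment

theorem monotoneOn_of_monotoneOn_div_rpow {g : ℝ → ℝ} {c η : ℝ}
    (hg : MonotoneOn (fun u => g u / u ^ c) (Ioo 0 η)) (hc : 0 ≤ c)
    (hg0 : ∀ u ∈ Ioo 0 η, 0 ≤ g u) : MonotoneOn g (Ioo 0 η) := by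
  intro t ht u hu htu
  have htc : 0 < t ^ c := Real.rpow_pos_of_pos ht.1 c
  have huc : 0 < u ^ c := Real.rpow_pos_of_pos hu.1 c
  calc g t = g t / t ^ c * t ^ c := by field_simp
    _ ≤ g u / u ^ c * t ^ c := mul_le_mul_of_nonneg_right (hg ht hu htu) htc.le
    _ ≤ g u / u ^ c * u ^ c :=
        mul_le_mul_of_nonneg_left (Real.rpow_le_rpow ht.1.le htu hc) (div_nonneg (hg0 u hu) huc.le)
    _ = g u := by field_simp

theorem dampedMoment_le_of_monotoneOn_div_rpow {g : ℝ → ℝ} {p c η t s : ℝ}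
    (hg0 : ∀ u ∈ Ioi 0, 0 ≤ g u) (hg : MonotoneOn (fun u => g u / u ^ c) (Ioo 0 η))
    (hp : 0 ≤ p) (hc : 0 < c) (ht : 0 < t) (h2t : 2 * t < η) (hs : 0 ≤ s) :
    dampedMoment g (p - 1) s (Ioi 0) ≤
      ENNReal.ofReal ((Real.exp (s * t) / (p + c) + 1) / t) * dampedMoment g p s (Ioi 0) := by
  have htη : t ∈ Ioo 0 η := ⟨ht, by linarith⟩
  have hgt : 0 ≤ g t := hg0 t ht
  have hmono := monotoneOn_of_monotoneOn_div_rpow hg hc.le fun u hu => hg0 u hu.1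
  have hlower := ofReal_le_dampedMoment ht hp hs hgt fun u hu =>
    hmono htη ⟨ht.trans hu.1, hu.2.trans_lt h2t⟩ hu.1.le
  have head : dampedMoment g (p - 1) s (Ioo 0 t) ≤
      ENNReal.ofReal (Real.exp (s * t) / (p + c) / t) * dampedMoment g p s (Ioi 0) :=
    calc dampedMoment g (p - 1) s (Ioo 0 t)
        ≤ ENNReal.ofReal (t ^ p * g t / (p + c)) :=
          dampedMoment_Ioo_le_of_monotoneOn_div_rpow hg htη hgt (by linarith) hs
      _ = ENNReal.ofReal (Real.exp (s * t) / (p + c) / t) *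
            ENNReal.ofReal (t ^ (p + 1) * Real.exp (-(s * t)) * g t) := by
          rw [← ENNReal.ofReal_mul (by positivity), Real.rpow_add_one ht.ne', Real.exp_neg]
          congr 1
          field_simp
      _ ≤ _ := by gcongr
  rw [dampedMoment_Ioi_eq_add ht, add_div, ENNReal.ofReal_add (by positivity) (by positivity),
    add_mul]
  exact add_le_add head (dampedMoment_Ici_le hg0 ht)

theorem hasDriftBound_of_zeroNearOrigin {g : ℝ → ℝ} {p lam : ℝ} (hg0 : ∀ u ∈ Ioi 0, 0 ≤ g u)
    (hg : ZeroNearOrigin g) (hlam : 0 ≤ lam) : HasDriftBound g p lam := by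
  obtain ⟨δ, hδ, hzero⟩ := hg
  refine ⟨1 / δ, fun s hs => ?_⟩
  rw [dampedMoment_Ioi_eq_add hδ, dampedMoment_Ioo_eq_zero hzero, zero_add]
  refine (dampedMoment_Ici_le hg0 hδ).trans ?_
  gcongr
  exact le_add_of_nonneg_left (mul_nonneg hlam hs)

theorem hasDriftBound_of_fasterThanPolynomialNearOrigin {g : ℝ → ℝ} {p lam : ℝ}
    (hg0 : ∀ u ∈ Ioi 0, 0 ≤ g u) (hg : FasterThanPolynomialNearOrigin g) (hp : 0 ≤ p)
    (hlam : 0 < lam) : HasDriftBound g p lam := by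
  set c := Real.exp (2 / lam)
  obtain ⟨η, hη, hmono⟩ := hg.2 c (Real.exp_pos _)
  set a := η / 4 with ha_def
  have ha : 0 < a := by positivity
  refine ⟨2 / a, fun s hs => ?_⟩
  set r := 1 / a + lam * s / 2
  have hr : 0 < r := by positivity
  have h2r : 2 * r = lam * s + 2 / a := by ring
  have ht : 0 < 1 / r := by positivity
  have hta : 1 / r ≤ a := by
    rw [div_le_iff₀ hr, mul_add, mul_one_div_cancel ha.ne']
    have : 0 ≤ a * (lam * s / 2) := by positivity
    linarith
  have hst : s * (1 / r) ≤ 2 / lam := by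
    rw [mul_one_div, div_le_div_iff₀ hr hlam]
    have : 0 < 2 / a := by positivity
    linarith
  have hcoef : (Real.exp (s * (1 / r)) / (p + c) + 1) / (1 / r) ≤ lam * s + 2 / a := by
    have hexp : Real.exp (s * (1 / r)) / (p + c) ≤ 1 := by
      rw [div_le_one (by positivity)]
      linarith [Real.exp_le_exp.2 hst]
    rw [div_div_eq_mul_div, div_one, ← h2r]
    nlinarith
  refine (dampedMoment_le_of_monotoneOn_div_rpow hg0 hmono.monotoneOn hp (Real.exp_pos _) ht
    (by linarith [ha_def]) hs).trans ?_
  gcongr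

theorem hasDriftBound_of_zeroNearOrigin_or_fasterThanPolynomialNearOrigin {g : ℝ → ℝ}
    {p lam : ℝ} (hg0 : ∀ u ∈ Ioi 0, 0 ≤ g u)
    (hg : ZeroNearOrigin g ∨ FasterThanPolynomialNearOrigin g) (hp : 0 ≤ p) (hlam : 0 < lam) :
    HasDriftBound g p lam :=
  hg.elim (hasDriftBound_of_zeroNearOrigin hg0 · hlam.le)
    (hasDriftBound_of_fasterThanPolynomialNearOrigin hg0 · hp hlam)

section Mixture

variable {ι : Type*} [Fintype ι] {g : ι → ℝ → ℝ} {w : ι → ℝ}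

theorem dampedMoment_sum (hmeas : ∀ i, Measurable (g i)) (hg0 : ∀ i, ∀ u ∈ Ioi 0, 0 ≤ g i u)
    (hw : ∀ i, 0 ≤ w i) (q s : ℝ) :
    dampedMoment (fun u => ∑ i, w i * g i u) q s (Ioi 0) =
      ∑ i, ENNReal.ofReal (w i) * dampedMoment (g i) q s (Ioi 0) := by
  have hterm : ∀ i, Measurable fun u : ℝ =>
      ENNReal.ofReal (u ^ q * Real.exp (-(s * u) / 2) * g i u) := fun i => by
    have := hmeas i
    fun_prop
  calc dampedMoment (fun u => ∑ i, w i * g i u) q s (Ioi 0)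
      = ∫⁻ u in Ioi 0, ∑ i, ENNReal.ofReal (w i) *
          ENNReal.ofReal (u ^ q * Real.exp (-(s * u) / 2) * g i u) := by
        refine setLIntegral_congr_fun measurableSet_Ioi fun u (hu : 0 < u) => ?_
        simp only [← ENNReal.ofReal_mul (hw _)]
        rw [← ENNReal.ofReal_sum_of_nonneg fun i _ => mul_nonneg (hw i) (mul_nonneg
          (mul_nonneg (Real.rpow_nonneg hu.le q) (Real.exp_pos _).le) (hg0 i u hu))]
        congr 1
        rw [Finset.mul_sum]
        exact Finset.sum_congr rfl fun i _ => by ring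
    _ = ∑ i, ENNReal.ofReal (w i) * dampedMoment (g i) q s (Ioi 0) := by
        rw [lintegral_finsetSum' _ fun i _ => ((hterm i).const_mul _).aemeasurable]
        exact Finset.sum_congr rfl fun i _ => lintegral_const_mul' _ _ ENNReal.ofReal_ne_top

theorem HasDriftBound.sum {p lam : ℝ} (hmeas : ∀ i, Measurable (g i))
    (hg0 : ∀ i, ∀ u ∈ Ioi 0, 0 ≤ g i u) (hw : ∀ i, 0 ≤ w i)
    (hg : ∀ i, HasDriftBound (g i) p lam) :
    HasDriftBound (fun u => ∑ i, w i * g i u) p lam := by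
  choose L hL using hg
  obtain ⟨L₀, hL₀⟩ := (Set.finite_range L).bddAbove
  refine ⟨L₀, fun s hs => ?_⟩
  rw [dampedMoment_sum hmeas hg0 hw, dampedMoment_sum hmeas hg0 hw, Finset.mul_sum]
  refine Finset.sum_le_sum fun i _ => ?_
  rw [mul_left_comm]
  refine mul_le_mul_right ((hL i s hs).trans ?_) _
  gcongr
  exact hL₀ ⟨i, rfl⟩

end Mixture

theorem finite_mixture_drift_bound_general (d : ℕ) (M : ℕ)
    (hs : Fin M → ℝ → ℝ) (hmix : ∀ i, IsMixingDensity (hs i))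
    (hclass : ∀ i, ZeroNearOrigin (hs i) ∨ FasterThanPolynomialNearOrigin (hs i))
    (w : Fin M → ℝ) (hw : ∀ i, 0 < w i)
    (h : ℝ → ℝ) (hdef : ∀ u : ℝ, h u = ∑ i, w i * hs i u) :
    ∀ lam : ℝ, 0 < lam → ∃ L : ℝ, ∀ s : ℝ, 0 ≤ s →
      (∫⁻ u in Ioi (0:ℝ),
          ENNReal.ofReal (u ^ (((d : ℝ) - 2) / 2) * Real.exp (-(s * u) / 2) * h u))
        ≤ ENNReal.ofReal (lam * s + L) *
          ∫⁻ u in Ioi (0:ℝ),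
            ENNReal.ofReal (u ^ ((d : ℝ) / 2) * Real.exp (-(s * u) / 2) * h u) := by
  intro lam hlam
  obtain rfl : h = fun u => ∑ i, w i * hs i u := funext hdef
  rw [show ((d : ℝ) - 2) / 2 = (d : ℝ) / 2 - 1 by ring]
  exact HasDriftBound.sum (fun i => (hmix i).1) (fun i => (hmix i).2.1) (fun i => (hw i).le)
    fun i => hasDriftBound_of_zeroNearOrigin_or_fasterThanPolynomialNearOrigin (hmix i).2.1
      (hclass i) (by positivity) hlam

/-- A finite mixture `h = Σ wᵢ hᵢ` of mixing densities, each satisfying condition `M` and each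
either zero near the origin or faster than polynomial near the origin, satisfies: for every
`λ > 0` there is `L ∈ ℝ` with
`∫_0^∞ u^{(d-2)/2} e^{-su/2} h du ≤ (λ s + L) ∫_0^∞ u^{d/2} e^{-su/2} h du` for all `s ≥ 0`. -/
theorem finite_mixture_drift_bound (d : ℕ) (hd : 0 < d) (M : ℕ) (hM0 : 0 < M)
    (hs : Fin M → ℝ → ℝ) (hmix : ∀ i, IsMixingDensity (hs i))
    (hcondM : ∀ i, ∫⁻ u in Ioi (0:ℝ), ENNReal.ofReal (u ^ ((d : ℝ) / 2) * hs i u) < ⊤)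
    (hclass : ∀ i, ZeroNearOrigin (hs i) ∨ FasterThanPolynomialNearOrigin (hs i))
    (w : Fin M → ℝ) (hw : ∀ i, 0 < w i) (hwsum : ∑ i, w i = 1)
    (h : ℝ → ℝ) (hdef : ∀ u : ℝ, h u = ∑ i, w i * hs i u) :
    ∀ lam : ℝ, 0 < lam → ∃ L : ℝ, ∀ s : ℝ, 0 ≤ s →
      (∫⁻ u in Ioi (0:ℝ),
          ENNReal.ofReal (u ^ (((d : ℝ) - 2) / 2) * Real.exp (-(s * u) / 2) * h u))
        ≤ ENNReal.ofReal (lam * s + L) *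
          ∫⁻ u in Ioi (0:ℝ),
            ENNReal.ofReal (u ^ ((d : ℝ) / 2) * Real.exp (-(s * u) / 2) * h u) :=
  finite_mixture_drift_bound_general d M hs hmix hclass w hw h hdef
end

section
/- Let α, γ > 0 and let h(u) = α γ^α u^{-(α+1)} e^{-(γ/u)^α} be the Fréchet(α, γ) density on (0,∞). Then h is faster than polynomial near the origin: for every c > 0, there exists η_c > 0 such that the function u ↦ h(u)/u^c is strictly increasing on (0, η_c). -/
open Set Real

/- Taking logarithms, `h u / u ^ c = α γ^α · exp (-φ u)` with `φ u = (α + 1 + c) log u + γ^α u^(-α)`.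
Since `φ' u = u⁻¹ ((α + 1 + c) - α γ^α u^(-α))`, the term `u^(-α)` dominates near `0`, so `φ` is
strictly decreasing on `(0, η)` as soon as `(α + 1 + c) η^α ≤ α γ^α`. -/

lemma strictAntiOn_mul_log_add_mul_rpow_neg {a b p η : ℝ} (ha : 0 < a) (hp : 0 < p)
    (hη : p * η ^ a ≤ a * b) :
    StrictAntiOn (fun u => p * log u + b * u ^ (-a)) (Ioo 0 η) := by
  have hderiv : ∀ u : ℝ, 0 < u →
      HasDerivAt (fun u => p * log u + b * u ^ (-a)) (p * u⁻¹ + b * (-a * u ^ (-a - 1))) u :=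
    fun u hu => ((hasDerivAt_log hu.ne').const_mul p).add
      ((hasDerivAt_rpow_const (Or.inl hu.ne')).const_mul b)
  refine strictAntiOn_of_deriv_neg (convex_Ioo 0 η)
    (fun u hu => (hderiv u hu.1).continuousAt.continuousWithinAt) fun u hu => ?_
  rw [interior_Ioo] at hu
  obtain ⟨hu0, huη⟩ := hu
  have hua : 0 < u ^ a := rpow_pos_of_pos hu0 a
  have hsmall : p * u ^ a < a * b :=
    (mul_lt_mul_of_pos_left (rpow_lt_rpow hu0.le huη ha) hp).trans_le hη
  have hpow : u ^ (-a - 1) = u⁻¹ / u ^ a := by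
    rw [rpow_sub hu0, rpow_neg hu0.le, rpow_one]; ring
  rw [(hderiv u hu0).deriv, hpow]
  have : p * u⁻¹ < a * b * (u⁻¹ / u ^ a) := by
    rw [mul_div_assoc', lt_div_iff₀ hua]
    nlinarith [inv_pos.2 hu0]
  linarith

lemma exists_pos_mul_rpow_eq {a b p : ℝ} (ha : 0 < a) (hb : 0 < b) (hp : 0 < p) :
    ∃ η > 0, p * η ^ a = a * b := by
  refine ⟨(a * b / p) ^ a⁻¹, by positivity, ?_⟩
  rw [rpow_inv_rpow (by positivity) ha.ne']
  field_simp

lemma mul_rpow_neg_mul_exp_div_rpow {u : ℝ} (hu : 0 < u) (K q c α : ℝ) {γ : ℝ} (hγ : 0 ≤ γ) :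
    K * u ^ (-q) * exp (-(γ / u) ^ α) / u ^ c =
      K * exp (-((q + c) * log u + γ ^ α * u ^ (-α))) := by
  have hpow : u ^ (-q) / u ^ c = exp (-((q + c) * log u)) := by
    rw [← rpow_sub hu, rpow_def_of_pos hu]; ring_nf
  rw [div_rpow hγ hu.le, neg_add, exp_add, ← mul_assoc, ← hpow, rpow_neg hu.le α, ← div_eq_mul_inv]
  ring

/-- The Fréchet(α, γ) density is faster than polynomial near the origin: for every `c > 0`,
`u ↦ h(u)/u^c` is strictly increasing on some interval `(0, η_c)`. -/
theorem frechet_faster_than_polynomial (α γ : ℝ) (hα : 0 < α) (hγ : 0 < γ) (h : ℝ → ℝ)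
    (hdef : ∀ u : ℝ, 0 < u →
      h u = α * γ ^ α * u ^ (-(α + 1)) * Real.exp (-(γ / u) ^ α)) :
    (∃ ε > 0, ∀ u ∈ Ioo (0:ℝ) ε, 0 < h u) ∧
    ∀ c : ℝ, 0 < c → ∃ η > 0, StrictMonoOn (fun u => h u / u ^ c) (Ioo (0:ℝ) η) := by
  refine ⟨⟨1, one_pos, fun u ⟨hu, _⟩ => by rw [hdef u hu]; positivity⟩, fun c hc => ?_⟩
  obtain ⟨η, hη, hηeq⟩ := exists_pos_mul_rpow_eq hα (rpow_pos_of_pos hγ α)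
    (by linarith : 0 < α + 1 + c)
  have hanti := strictAntiOn_mul_log_add_mul_rpow_neg hα (by linarith) hηeq.le
  refine ⟨η, hη, fun x hx y hy hxy => ?_⟩
  simp only [hdef x hx.1, hdef y hy.1,
    mul_rpow_neg_mul_exp_div_rpow hx.1, mul_rpow_neg_mul_exp_div_rpow hy.1, hγ.le]
  have hK : 0 < α * γ ^ α := by positivity
  exact mul_lt_mul_of_pos_left (exp_lt_exp.2 (neg_lt_neg (hanti hx hy hxy))) hK
end

section
/- Let a, b > 0 and v ∈ ℝ, and let h be the generalized inverse Gaussian GIG(v, a, b) density, h(u) = C · u^{v-1} exp(−(a u + b/u)/2) for u > 0, where C = (a/b)^{v/2} / (2 K_v(√(ab))) is the normalizing constant (K_v denoting the modified Bessel function of the second kind). Then h is faster than polynomial near the origin: for every c > 0, there exists η_c > 0 such that the function u ↦ h(u)/u^c is strictly increasing on (0, η_c). -/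
/-! Put `p = v - 1 - c`, so that `h u / u ^ c = C u^p exp(-(au + b/u)/2)` for `u > 0`. Its
derivative is `C u^(p-1) exp(-(au + b/u)/2) (p + (b/u - au)/2)`, and the last factor tends to
`+∞` as `u → 0⁺` because of the term `b/u`, so the derivative is positive near the origin. -/

open Set Filter Topology

theorem exists_strictMonoOn_Ioo_of_eventually_hasDerivAt_pos {f f' : ℝ → ℝ} {x : ℝ}
    (hf : ∀ᶠ u in 𝓝[>] x, HasDerivAt f (f' u) u ∧ 0 < f' u) :
    ∃ η > x, StrictMonoOn f (Ioo x η) := by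
  obtain ⟨η, hη, hsub⟩ := mem_nhdsGT_iff_exists_Ioo_subset.mp hf
  refine ⟨η, hη, strictMonoOn_of_hasDerivWithinAt_pos (f' := f') (convex_Ioo x η) ?_ ?_ ?_⟩
  · exact fun u hu => (hsub hu).1.continuousAt.continuousWithinAt
  · rw [interior_Ioo]
    exact fun u hu => (hsub hu).1.hasDerivWithinAt
  · rw [interior_Ioo]
    exact fun u hu => (hsub hu).2

theorem hasDerivAt_rpow_mul_exp_neg_add_div (p a b : ℝ) {u : ℝ} (hu : 0 < u) :
    HasDerivAt (fun u => u ^ p * Real.exp (-(a * u + b / u) / 2))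
      (u ^ (p - 1) * Real.exp (-(a * u + b / u) / 2) * (p + (b / u - a * u) / 2)) u := by
  have hpow : HasDerivAt (fun u : ℝ => u ^ p) (p * u ^ (p - 1)) u :=
    Real.hasDerivAt_rpow_const (Or.inl hu.ne')
  have hinv : HasDerivAt (fun u : ℝ => b / u) (-(b / u ^ 2)) u := by
    simpa [div_eq_mul_inv] using (hasDerivAt_inv hu.ne').const_mul b
  have hexponent : HasDerivAt (fun u => -(a * u + b / u) / 2) (-(a - b / u ^ 2) / 2) u :=
    (((((hasDerivAt_id' u).const_mul a).add hinv).neg).div_const 2).congr_deriv (by ring)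
  refine (hpow.mul hexponent.exp).congr_deriv ?_
  rw [show u ^ p = u ^ (p - 1) * u by rw [← Real.rpow_add_one hu.ne', sub_add_cancel]]
  field_simp
  ring

theorem eventually_pos_add_div_sub_mul_nhdsGT_zero (p a : ℝ) {b : ℝ} (hb : 0 < b) :
    ∀ᶠ u in 𝓝[>] (0 : ℝ), 0 < p + (b / u - a * u) / 2 := by
  have hdiv : Tendsto (fun u : ℝ => b / 2 * u⁻¹) (𝓝[>] 0) atTop :=
    tendsto_inv_nhdsGT_zero.const_mul_atTop (half_pos hb)
  have hrest : Tendsto (fun u : ℝ => p - a / 2 * u) (𝓝[>] 0) (𝓝 (p - a / 2 * 0)) :=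
    (tendsto_const_nhds.sub (tendsto_nhdsWithin_of_tendsto_nhds
      (continuous_const.mul continuous_id).continuousAt))
  filter_upwards [(hdiv.atTop_add hrest).eventually_gt_atTop 0] with u hu
  linarith [show b / 2 * u⁻¹ + (p - a / 2 * u) = p + (b / u - a * u) / 2 by ring]

theorem gig_faster_than_polynomial_general (a b : ℝ) (hb : 0 < b) (v : ℝ)
    (C : ℝ) (hC : 0 < C)
    (h : ℝ → ℝ)
    (hdef : ∀ u : ℝ, 0 < u →
      h u = C * u ^ (v - 1) * Real.exp (-(a * u + b / u) / 2)) :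
    (∃ ε > 0, ∀ u ∈ Ioo (0:ℝ) ε, 0 < h u) ∧
    ∀ c : ℝ, 0 < c → ∃ η > 0, StrictMonoOn (fun u => h u / u ^ c) (Ioo (0:ℝ) η) := by
  refine ⟨⟨1, one_pos, fun u hu => ?_⟩, fun c _ => ?_⟩
  · rw [hdef u hu.1]
    have := hu.1
    positivity
  set p := v - 1 - c with hp
  have hderiv : ∀ᶠ u in 𝓝[>] (0 : ℝ),
      HasDerivAt (fun u => C * (u ^ p * Real.exp (-(a * u + b / u) / 2)))
        (C * (u ^ (p - 1) * Real.exp (-(a * u + b / u) / 2) * (p + (b / u - a * u) / 2))) u ∧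
      0 < C * (u ^ (p - 1) * Real.exp (-(a * u + b / u) / 2) * (p + (b / u - a * u) / 2)) := by
    filter_upwards [self_mem_nhdsWithin, eventually_pos_add_div_sub_mul_nhdsGT_zero p a hb]
      with u (hu : 0 < u) hpos
    exact ⟨(hasDerivAt_rpow_mul_exp_neg_add_div p a b hu).const_mul C, by positivity⟩
  obtain ⟨η, hη, hmono⟩ := exists_strictMonoOn_Ioo_of_eventually_hasDerivAt_pos hderiv
  refine ⟨η, hη, hmono.congr fun u hu => ?_⟩
  simp only [hdef u hu.1, hp, Real.rpow_sub hu.1]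
  ring

/-- The generalized inverse Gaussian `GIG(v, a, b)` density
`h(u) = C u^{v-1} exp(-(au + b/u)/2)`, where `C > 0` is the normalizing constant (which
equals `(a/b)^{v/2}/(2 K_v(√(ab)))`, `K_v` being the modified Bessel function of the second
kind), is faster than polynomial near the origin: for every `c > 0`, `u ↦ h(u)/u^c` is
strictly increasing on some interval `(0, η_c)`. -/
theorem gig_faster_than_polynomial (a b : ℝ) (ha : 0 < a) (hb : 0 < b) (v : ℝ)
    (C : ℝ) (hC : 0 < C)
    (hnorm : ∫ u in Ioi (0:ℝ),
      C * u ^ (v - 1) * Real.exp (-(a * u + b / u) / 2) = 1)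
    (h : ℝ → ℝ)
    (hdef : ∀ u : ℝ, 0 < u →
      h u = C * u ^ (v - 1) * Real.exp (-(a * u + b / u) / 2)) :
    (∃ ε > 0, ∀ u ∈ Ioo (0:ℝ) ε, 0 < h u) ∧
    ∀ c : ℝ, 0 < c → ∃ η > 0, StrictMonoOn (fun u => h u / u ^ c) (Ioo (0:ℝ) η) :=
  gig_faster_than_polynomial_general a b hb v C hC h hdef
end
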